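/- arXiv:1412.1975 — 4 statements merged into one kernel-verified Lean document; each statement's English description precedes it below -/
import Mathlib

section
/- Let n ≥ 2 be even, Q_n(i,j) := [i/n,(i+1)/n] × [j/n,(j+1)/n] for i,j ∈ {0,…,n−1}, and T_n := ⋃_{i,j ∈ {0,…,n−1}, i+j ≡ 0 (mod 2)} Q_n(i,j) ⊆ ℝ². Then T_n is connected, and the set Y := {((n−k)/n, k/n) : k = 1, …, n−1} is an irreducible cut set of T_n of cardinality #Y = n − 1. -/
open Set Filter Topology

/-- A set is the union of two nonempty separated sets. -/
def SepUnion {α : Type*} [TopologicalSpace α] (S : Set α) : Prop :=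
  ∃ U V : Set α, S = U ∪ V ∧ U.Nonempty ∧ V.Nonempty ∧
    closure U ∩ V = ∅ ∧ U ∩ closure V = ∅

/-- `X` is a cut set of `T`: `X ⊆ T` and `T \ X` is disconnected. -/
def IsCutSet {α : Type*} [TopologicalSpace α] (T X : Set α) : Prop :=
  X ⊆ T ∧ SepUnion (T \ X)

/-- `X` is an irreducible cut set of `T`. -/
def IsIrredCutSet {α : Type*} [TopologicalSpace α] (T X : Set α) : Prop :=
  IsCutSet T X ∧ ∀ X₀ : Set α, X₀ ⊂ X → closure X₀ ∩ T ⊆ X₀ → ¬ SepUnion (T \ X₀)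

/-- The square `Q_n(i,j) = [i/n,(i+1)/n] × [j/n,(j+1)/n]`. -/
def Qsq (n i j : ℕ) : Set (ℝ × ℝ) :=
  Set.Icc ((i : ℝ) / n) (((i : ℝ) + 1) / n) ×ˢ Set.Icc ((j : ℝ) / n) (((j : ℝ) + 1) / n)

/-- The checkerboard set `T_n`. -/
def Tcheck (n : ℕ) : Set (ℝ × ℝ) :=
  ⋃ p ∈ {p : ℕ × ℕ | p.1 < n ∧ p.2 < n ∧ (p.1 + p.2) % 2 = 0}, Qsq n p.1 p.2

/-!
The cells of `T_n` along the antidiagonal `x + y = 1` would have `i + j = n - 1`, which is odd, so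
the antidiagonal meets `T_n` only in corners of cells, namely in `Y`, and `T_n \ Y` splits into the
parts below and above it. The lower part is a union of convex pieces chained together through
shared corners, hence connected, and the point reflection `x ↦ (1, 1) - x` preserves `T_n` and maps
the lower part onto the upper one. Each point of `Y` is a corner of a lower and of an upper cell, so
it lies in the closure of both parts: putting back any one point of `Y` reconnects `T_n \ Y`.
This gives irreducibility, and with nothing removed, connectedness of `T_n`.
-/

open Relation

section Separation

variable {α : Type*} [TopologicalSpace α]

theorem not_sepUnion_of_isPreconnected {W : Set α} (h : IsPreconnected W) : ¬ SepUnion W := by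
  rintro ⟨A, B, rfl, ⟨a, ha⟩, ⟨b, hb⟩, hAB, hBA⟩
  obtain ⟨x, hx, hxA, hxB⟩ := isPreconnected_closed_iff.mp h _ _ isClosed_closure isClosed_closure
    (union_subset_union subset_closure subset_closure)
    ⟨a, Or.inl ha, subset_closure ha⟩ ⟨b, Or.inr hb, subset_closure hb⟩
  rcases hx with hx | hx
  · exact hBA.subset ⟨hx, hxB⟩
  · exact hAB.subset ⟨hxA, hx⟩

theorem isPreconnected_of_subset_closure_union {U V W : Set α} (hU : IsPreconnected U)
    (hV : IsPreconnected V) {y : α} (hyU : y ∈ closure U) (hyV : y ∈ closure V) (hyW : y ∈ W)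
    (hUVW : U ∪ V ⊆ W) (hW : W ⊆ closure U ∪ closure V) : IsPreconnected W := by
  have hU' : IsPreconnected (insert y U) :=
    hU.subset_closure (subset_insert y U) (insert_subset hyU subset_closure)
  have hV' : IsPreconnected (insert y V) :=
    hV.subset_closure (subset_insert y V) (insert_subset hyV subset_closure)
  refine (hU'.union y (mem_insert y U) (mem_insert y V) hV').subset_closure
    (union_subset (insert_subset hyW fun x hx => hUVW (Or.inl hx))
      (insert_subset hyW fun x hx => hUVW (Or.inr hx))) ?_
  refine hW.trans (union_subset (closure_mono ?_) (closure_mono ?_)) <;> intro x hx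
  exacts [Or.inl (Or.inr hx), Or.inr (Or.inr hx)]

theorem isPreconnected_biUnion_of_reflTransGen_root {ι : Type*} {t : Set ι} {s : ι → Set α}
    (H : ∀ i ∈ t, IsPreconnected (s i)) (r : ι)
    (K : ∀ i ∈ t, ReflTransGen (fun i j => (s i ∩ s j).Nonempty ∧ i ∈ t ∧ j ∈ t) i r) :
    IsPreconnected (⋃ i ∈ t, s i) := by
  refine IsPreconnected.biUnion_of_reflTransGen H fun i hi j hj => ?_
  have hj : ReflTransGen (fun i j => (s i ∩ s j).Nonempty ∧ i ∈ t ∧ j ∈ t) r j :=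
    ReflTransGen.mono (fun a b ⟨h, hb, ha⟩ => ⟨by rwa [inter_comm], ha, hb⟩) _ _
      (reflTransGen_swap.mpr (K j hj))
  exact ReflTransGen.mono (fun a b h => ⟨h.1, h.2.1⟩) _ _ ((K i hi).trans hj)

end Separation

theorem mem_closure_inter_add_lt_one {C : Set (ℝ × ℝ)} (hC : Convex ℝ C) {a y : ℝ × ℝ}
    (ha : a ∈ C ∩ {x | x.1 + x.2 < 1}) (hy : y ∈ C) (hy1 : y.1 + y.2 ≤ 1) :
    y ∈ closure (C ∩ {x | x.1 + x.2 < 1}) := by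
  refine closure_mono ?_ (segment_subset_closure_openSegment (right_mem_segment ℝ a y))
  rintro z ⟨s, t, hs, ht, hst, rfl⟩
  have ha1 : a.1 + a.2 < 1 := ha.2
  refine ⟨hC.openSegment_subset ha.1 hy ⟨s, t, hs, ht, hst, rfl⟩, ?_⟩
  simp only [mem_ofPred_eq, Prod.fst_add, Prod.snd_add, Prod.smul_fst, Prod.smul_snd, smul_eq_mul]
  nlinarith

namespace Checkerboard

variable {n i j : ℕ}

theorem mem_Qsq {x : ℝ × ℝ} :
    x ∈ Qsq n i j ↔ ((i : ℝ) / n ≤ x.1 ∧ x.1 ≤ ((i : ℝ) + 1) / n) ∧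
      ((j : ℝ) / n ≤ x.2 ∧ x.2 ≤ ((j : ℝ) + 1) / n) :=
  Iff.rfl

theorem corner_mem_Qsq {a b : ℕ} (ha : i ≤ a ∧ a ≤ i + 1) (hb : j ≤ b ∧ b ≤ j + 1) :
    ((a : ℝ) / n, (b : ℝ) / n) ∈ Qsq n i j := by
  refine ⟨⟨?_, ?_⟩, ?_, ?_⟩ <;> dsimp only <;> gcongr <;> exact_mod_cast (by omega)

theorem convex_Qsq : Convex ℝ (Qsq n i j) :=
  (convex_Icc _ _).prod (convex_Icc _ _)

theorem Qsq_subset_Tcheck (hi : i < n) (hj : j < n) (hij : (i + j) % 2 = 0) :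
    Qsq n i j ⊆ Tcheck n :=
  subset_biUnion_of_mem (u := fun p : ℕ × ℕ => Qsq n p.1 p.2) (x := (i, j)) ⟨hi, hj, hij⟩

theorem exists_mem_Qsq_of_mem_Tcheck {x : ℝ × ℝ} (hx : x ∈ Tcheck n) :
    ∃ i j, i < n ∧ j < n ∧ (i + j) % 2 = 0 ∧ x ∈ Qsq n i j := by
  obtain ⟨⟨i, j⟩, ⟨hi, hj, hij⟩, hx⟩ := mem_iUnion₂.mp hx
  exact ⟨i, j, hi, hj, hij, hx⟩

theorem add_div_le_of_mem_Qsq {x : ℝ × ℝ} (hx : x ∈ Qsq n i j) :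
    ((i : ℝ) + j) / n ≤ x.1 + x.2 := by
  rw [add_div]
  linarith [hx.1.1, hx.2.1]

theorem le_add_div_of_mem_Qsq {x : ℝ × ℝ} (hx : x ∈ Qsq n i j) :
    x.1 + x.2 ≤ ((i : ℝ) + j + 2) / n := by
  rw [show ((i : ℝ) + j + 2) / n = ((i : ℝ) + 1) / n + ((j : ℝ) + 1) / n by ring]
  linarith [hx.1.2, hx.2.2]

theorem eq_of_mem_Qsq_of_add_le {x : ℝ × ℝ} (hx : x ∈ Qsq n i j)
    (h : x.1 + x.2 ≤ ((i : ℝ) + j) / n) : x = ((i : ℝ) / n, (j : ℝ) / n) := by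
  rw [add_div] at h
  ext <;> linarith [hx.1.1, hx.2.1]

theorem eq_of_mem_Qsq_of_le_add {x : ℝ × ℝ} (hx : x ∈ Qsq n i j)
    (h : ((i : ℝ) + j + 2) / n ≤ x.1 + x.2) :
    x = (((i + 1 : ℕ) : ℝ) / n, ((j + 1 : ℕ) : ℝ) / n) := by
  rw [show ((i : ℝ) + j + 2) / n = ((i : ℝ) + 1) / n + ((j : ℝ) + 1) / n by ring] at h
  push_cast
  ext <;> linarith [hx.1.2, hx.2.2]

noncomputable def cutPoint (n k : ℕ) : ℝ × ℝ := (((n : ℝ) - k) / n, (k : ℝ) / n)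

def cutSet (n : ℕ) : Set (ℝ × ℝ) := cutPoint n '' {k | 1 ≤ k ∧ k ≤ n - 1}

theorem cutPoint_eq {a k : ℕ} (h : a + k = n) : cutPoint n k = ((a : ℝ) / n, (k : ℝ) / n) := by
  simp [cutPoint, ← h]

theorem cutPoint_mem_cutSet {k : ℕ} (hk : 1 ≤ k) (hkn : k < n) : cutPoint n k ∈ cutSet n :=
  mem_image_of_mem _ ⟨hk, by omega⟩

theorem cutSet_subset_Tcheck (hn : Even n) : cutSet n ⊆ Tcheck n := by
  rintro _ ⟨k, ⟨hk, hkn⟩, rfl⟩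
  have := Nat.even_iff.mp hn
  rw [cutPoint_eq (Nat.sub_add_cancel (by omega : k ≤ n))]
  exact Qsq_subset_Tcheck (i := n - k) (j := k) (by omega) (by omega) (by omega)
    (corner_mem_Qsq (by omega) (by omega))

theorem add_eq_one_of_mem_cutSet {y : ℝ × ℝ} (hy : y ∈ cutSet n) : y.1 + y.2 = 1 := by
  obtain ⟨k, ⟨hk, hkn⟩, rfl⟩ := hy
  have hn : (n : ℝ) ≠ 0 := by norm_cast; omega
  simp only [cutPoint]
  field_simp
  ring

theorem mem_cutSet_of_mem_Tcheck (hn : Even n) {x : ℝ × ℝ} (hx : x ∈ Tcheck n)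
    (h1 : x.1 + x.2 = 1) : x ∈ cutSet n := by
  obtain ⟨i, j, hi, hj, hij, hx⟩ := exists_mem_Qsq_of_mem_Tcheck hx
  have := Nat.even_iff.mp hn
  have hn0 : (0 : ℝ) < n := by norm_cast; omega
  have hlow : ((i : ℝ) + j) / n ≤ 1 := h1 ▸ add_div_le_of_mem_Qsq hx
  have hup : 1 ≤ ((i : ℝ) + j + 2) / n := h1 ▸ le_add_div_of_mem_Qsq hx
  rw [div_le_one hn0] at hlow
  rw [one_le_div hn0] at hup
  have hlow : i + j ≤ n := by exact_mod_cast hlow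
  have hup : n ≤ i + j + 2 := by exact_mod_cast hup
  rcases (by omega : i + j = n ∨ i + 1 + (j + 1) = n) with h | h
  · have e : (i : ℝ) + j = n := by exact_mod_cast h
    rw [eq_of_mem_Qsq_of_add_le hx (by rw [h1, e, div_self hn0.ne']), ← cutPoint_eq h]
    exact cutPoint_mem_cutSet (by omega) hj
  · have e : (i : ℝ) + j + 2 = n := by exact_mod_cast (by omega : i + j + 2 = n)
    rw [eq_of_mem_Qsq_of_le_add hx (by rw [h1, e, div_self hn0.ne']), ← cutPoint_eq h]
    exact cutPoint_mem_cutSet (by omega) (by omega)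

def lowerHalf (n : ℕ) : Set (ℝ × ℝ) := Tcheck n ∩ {x | x.1 + x.2 < 1}

def upperHalf (n : ℕ) : Set (ℝ × ℝ) := Tcheck n ∩ {x | 1 < x.1 + x.2}

theorem Tcheck_subset_union (hn : Even n) : Tcheck n ⊆ lowerHalf n ∪ upperHalf n ∪ cutSet n := by
  intro x hx
  rcases lt_trichotomy (x.1 + x.2) 1 with h | h | h
  · exact Or.inl (Or.inl ⟨hx, h⟩)
  · exact Or.inr (mem_cutSet_of_mem_Tcheck hn hx h)
  · exact Or.inl (Or.inr ⟨hx, h⟩)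

theorem union_subset_Tcheck_diff {X : Set (ℝ × ℝ)} (hX : X ⊆ cutSet n) :
    lowerHalf n ∪ upperHalf n ⊆ Tcheck n \ X := by
  rintro x (⟨hx, h⟩ | ⟨hx, h⟩) <;> refine ⟨hx, fun hxX => ?_⟩ <;>
    simp only [mem_ofPred_eq, add_eq_one_of_mem_cutSet (hX hxX), lt_self_iff_false] at h

def reflect (x : ℝ × ℝ) : ℝ × ℝ := (1 - x.1, 1 - x.2)

theorem reflect_involutive : Function.Involutive reflect := fun x => by simp [reflect]

theorem continuous_reflect : Continuous reflect := by unfold reflect; fun_prop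

theorem natCast_sub_one_sub_div (hi : i < n) :
    ((n - 1 - i : ℕ) : ℝ) / n = 1 - ((i : ℝ) + 1) / n ∧
      (((n - 1 - i : ℕ) : ℝ) + 1) / n = 1 - (i : ℝ) / n := by
  have hn : (n : ℝ) ≠ 0 := by norm_cast; omega
  rw [show n - 1 - i = n - (i + 1) by omega, Nat.cast_sub (by omega)]
  push_cast
  exact ⟨by field_simp, by field_simp; ring⟩

theorem reflect_mem_Qsq {x : ℝ × ℝ} (hi : i < n) (hj : j < n) (hx : x ∈ Qsq n i j) :
    reflect x ∈ Qsq n (n - 1 - i) (n - 1 - j) := by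
  rw [mem_Qsq, (natCast_sub_one_sub_div hi).1, (natCast_sub_one_sub_div hi).2,
    (natCast_sub_one_sub_div hj).1, (natCast_sub_one_sub_div hj).2]
  simp only [reflect]
  refine ⟨⟨?_, ?_⟩, ?_, ?_⟩ <;> linarith [hx.1.1, hx.1.2, hx.2.1, hx.2.2]

theorem reflect_mem_Tcheck {x : ℝ × ℝ} (hx : x ∈ Tcheck n) : reflect x ∈ Tcheck n := by
  obtain ⟨i, j, hi, hj, hij, hx⟩ := exists_mem_Qsq_of_mem_Tcheck hx
  exact Qsq_subset_Tcheck (by omega) (by omega) (by omega) (reflect_mem_Qsq hi hj hx)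

theorem image_reflect_lowerHalf : reflect '' lowerHalf n = upperHalf n := by
  rw [reflect_involutive.image_eq_preimage_symm]
  ext x
  refine and_congr ⟨fun hx => reflect_involutive x ▸ reflect_mem_Tcheck hx, reflect_mem_Tcheck⟩ ?_
  simp only [mem_ofPred_eq, reflect]
  constructor <;> intro h <;> linarith

theorem reflect_mem_cutSet {y : ℝ × ℝ} (hy : y ∈ cutSet n) : reflect y ∈ cutSet n := by
  obtain ⟨k, ⟨hk, hkn⟩, rfl⟩ := hy
  have hn : (n : ℝ) ≠ 0 := by norm_cast; omega
  refine ⟨n - k, ⟨by omega, by omega⟩, ?_⟩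
  rw [cutPoint_eq (Nat.sub_add_cancel (by omega : k ≤ n)),
    cutPoint_eq (by omega : k + (n - k) = n)]
  simp only [reflect]
  rw [Nat.cast_sub (by omega : k ≤ n)]
  ext
  · field_simp; ring
  · field_simp

def lowerCells (n : ℕ) : Set (ℕ × ℕ) := {p | p.1 + p.2 + 2 ≤ n ∧ (p.1 + p.2) % 2 = 0}

def lowerPiece (n : ℕ) (p : ℕ × ℕ) : Set (ℝ × ℝ) := Qsq n p.1 p.2 ∩ {x | x.1 + x.2 < 1}

theorem lowerPiece_subset_lowerHalf {p : ℕ × ℕ} (hp : p ∈ lowerCells n) :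
    lowerPiece n p ⊆ lowerHalf n := by
  obtain ⟨hp, hpar⟩ := hp
  exact fun _ hx => ⟨Qsq_subset_Tcheck (by omega) (by omega) hpar hx.1, hx.2⟩

theorem lowerHalf_eq_biUnion (hn : Even n) : lowerHalf n = ⋃ p ∈ lowerCells n, lowerPiece n p := by
  refine subset_antisymm (fun x ⟨hx, h⟩ => ?_) (iUnion₂_subset fun p => lowerPiece_subset_lowerHalf)
  obtain ⟨i, j, hi, hj, hij, hx⟩ := exists_mem_Qsq_of_mem_Tcheck hx
  have hn0 : (0 : ℝ) < n := by norm_cast; omega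
  have hlt : i + j < n := by
    have := (add_div_le_of_mem_Qsq hx).trans_lt h
    rw [div_lt_one hn0] at this
    exact_mod_cast this
  have := Nat.even_iff.mp hn
  exact mem_biUnion (x := (i, j)) ⟨by omega, hij⟩ ⟨hx, h⟩

theorem corner_mem_lowerPiece {p : ℕ × ℕ} {a b : ℕ} (ha : p.1 ≤ a ∧ a ≤ p.1 + 1)
    (hb : p.2 ≤ b ∧ b ≤ p.2 + 1) (hab : a + b < n) :
    ((a : ℝ) / n, (b : ℝ) / n) ∈ lowerPiece n p := by
  refine ⟨corner_mem_Qsq ha hb, ?_⟩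
  change (a : ℝ) / n + b / n < 1
  rw [← add_div, div_lt_one (by norm_cast; omega)]
  exact_mod_cast hab

def LowerAdj (n : ℕ) (p q : ℕ × ℕ) : Prop :=
  (lowerPiece n p ∩ lowerPiece n q).Nonempty ∧ p ∈ lowerCells n ∧ q ∈ lowerCells n

theorem lowerAdj_of_corner {p q : ℕ × ℕ} (a b : ℕ) (hp : p ∈ lowerCells n) (hq : q ∈ lowerCells n)
    (h : p.1 ≤ a ∧ a ≤ p.1 + 1 ∧ p.2 ≤ b ∧ b ≤ p.2 + 1 ∧
      q.1 ≤ a ∧ a ≤ q.1 + 1 ∧ q.2 ≤ b ∧ b ≤ q.2 + 1 ∧ a + b < n) :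
    LowerAdj n p q := by
  obtain ⟨hpa, hpa', hpb, hpb', hqa, hqa', hqb, hqb', hab⟩ := h
  exact ⟨⟨_, corner_mem_lowerPiece ⟨hpa, hpa'⟩ ⟨hpb, hpb'⟩ hab,
    corner_mem_lowerPiece ⟨hqa, hqa'⟩ ⟨hqb, hqb'⟩ hab⟩, hp, hq⟩

theorem lowerAdj_reflTransGen_zero : ∀ p ∈ lowerCells n, ReflTransGen (LowerAdj n) p (0, 0) := by
  suffices ∀ m i j, i + j = m → i + j + 2 ≤ n → (i + j) % 2 = 0 →
      ReflTransGen (LowerAdj n) (i, j) (0, 0) from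
    fun p hp => this _ p.1 p.2 rfl hp.1 hp.2
  intro m
  induction m using Nat.strong_induction_on with
  | _ m ih =>
  rintro i j rfl hij hpar
  -- Step diagonally down; on an edge of the quadrant, detour through the neighbouring cell.
  match i, j, hij, hpar with
  | 0, 0, _, _ => exact .refl
  | 0, 1, _, hpar | 1, 0, _, hpar => exact absurd hpar (by decide)
  | i + 1, j + 1, hij, hpar =>
    exact .head (lowerAdj_of_corner (i + 1) (j + 1) ⟨hij, hpar⟩ ⟨by omega, by omega⟩ (by omega))
      (ih _ (by omega) i j rfl (by omega) (by omega))
  | 0, j + 2, hij, hpar =>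
    exact .head
      (lowerAdj_of_corner (q := (1, j + 1)) 1 (j + 2) ⟨hij, hpar⟩ ⟨by omega, by omega⟩ (by omega))
      (.head (lowerAdj_of_corner 1 (j + 1) ⟨by omega, by omega⟩ ⟨by omega, by omega⟩ (by omega))
        (ih _ (by omega) 0 j rfl (by omega) (by omega)))
  | i + 2, 0, hij, hpar =>
    exact .head
      (lowerAdj_of_corner (q := (i + 1, 1)) (i + 2) 1 ⟨hij, hpar⟩ ⟨by omega, by omega⟩ (by omega))
      (.head (lowerAdj_of_corner (i + 1) 1 ⟨by omega, by omega⟩ ⟨by omega, by omega⟩ (by omega))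
        (ih _ (by omega) i 0 rfl (by omega) (by omega)))

theorem convex_add_lt_one : Convex ℝ {x : ℝ × ℝ | x.1 + x.2 < 1} :=
  convex_halfSpace_lt (LinearMap.fst ℝ ℝ ℝ + LinearMap.snd ℝ ℝ ℝ).isLinear 1

theorem isPreconnected_lowerHalf (hn : Even n) : IsPreconnected (lowerHalf n) := by
  rw [lowerHalf_eq_biUnion hn]
  exact isPreconnected_biUnion_of_reflTransGen_root
    (fun _ _ => (convex_Qsq.inter convex_add_lt_one).isPreconnected) (0, 0)
    lowerAdj_reflTransGen_zero

theorem isPreconnected_upperHalf (hn : Even n) : IsPreconnected (upperHalf n) := by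
  rw [← image_reflect_lowerHalf]
  exact (isPreconnected_lowerHalf hn).image _ continuous_reflect.continuousOn

theorem cutSet_subset_closure_lowerHalf (hn : Even n) : cutSet n ⊆ closure (lowerHalf n) := by
  rintro _ ⟨k, ⟨hk, hkn⟩, rfl⟩
  have := Nat.even_iff.mp hn
  -- `cutPoint n k` is the upper right corner of the cell `(n - k - 1, k - 1)`.
  have hp : (n - k - 1, k - 1) ∈ lowerCells n := ⟨by omega, by omega⟩
  refine closure_mono (lowerPiece_subset_lowerHalf hp) (mem_closure_inter_add_lt_one convex_Qsq
    (corner_mem_lowerPiece (a := n - k - 1) (b := k - 1) (by omega) (by omega) (by omega)) ?_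
    (add_eq_one_of_mem_cutSet (cutPoint_mem_cutSet hk (by omega))).le)
  rw [cutPoint_eq (a := n - k) (by omega)]
  exact corner_mem_Qsq (by omega) (by omega)

theorem cutSet_subset_closure_upperHalf (hn : Even n) : cutSet n ⊆ closure (upperHalf n) := by
  intro y hy
  rw [← image_reflect_lowerHalf, ← reflect_involutive y]
  exact image_closure_subset_closure_image continuous_reflect
    (mem_image_of_mem _ (cutSet_subset_closure_lowerHalf hn (reflect_mem_cutSet hy)))

theorem isPreconnected_Tcheck_diff (hn : Even n) {X : Set (ℝ × ℝ)} (hX : X ⊆ cutSet n)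
    {y : ℝ × ℝ} (hy : y ∈ cutSet n) (hyX : y ∉ X) : IsPreconnected (Tcheck n \ X) :=
  isPreconnected_of_subset_closure_union (isPreconnected_lowerHalf hn) (isPreconnected_upperHalf hn)
    (cutSet_subset_closure_lowerHalf hn hy) (cutSet_subset_closure_upperHalf hn hy)
    ⟨cutSet_subset_Tcheck hn hy, hyX⟩ (union_subset_Tcheck_diff hX) <|
    sdiff_subset.trans <| (Tcheck_subset_union hn).trans <|
      union_subset (union_subset_union subset_closure subset_closure)
        ((cutSet_subset_closure_lowerHalf hn).trans subset_union_left)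

theorem closure_lowerHalf_subset : closure (lowerHalf n) ⊆ {x | x.1 + x.2 ≤ 1} :=
  (closure_mono inter_subset_right).trans (closure_lt_subset_le (by fun_prop) continuous_const)

theorem closure_upperHalf_subset : closure (upperHalf n) ⊆ {x | 1 ≤ x.1 + x.2} :=
  (closure_mono inter_subset_right).trans (closure_lt_subset_le continuous_const (by fun_prop))

theorem lowerHalf_nonempty (hn : 2 ≤ n) : (lowerHalf n).Nonempty :=
  ⟨_, lowerPiece_subset_lowerHalf (p := (0, 0)) ⟨by omega, rfl⟩
    (corner_mem_lowerPiece (a := 0) (b := 0) (by omega) (by omega) (by omega))⟩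

theorem sepUnion_Tcheck_diff_cutSet (hn : Even n) (hn2 : 2 ≤ n) :
    SepUnion (Tcheck n \ cutSet n) := by
  refine ⟨lowerHalf n, upperHalf n, subset_antisymm ?_ (union_subset_Tcheck_diff subset_rfl),
    lowerHalf_nonempty hn2, image_reflect_lowerHalf ▸ (lowerHalf_nonempty hn2).image _,
    eq_empty_of_forall_notMem fun x ⟨hl, hu⟩ =>
      (closure_lowerHalf_subset hl).not_gt (show 1 < x.1 + x.2 from hu.2),
    eq_empty_of_forall_notMem fun x ⟨hl, hu⟩ =>
      (closure_upperHalf_subset hu).not_gt (show x.1 + x.2 < 1 from hl.2)⟩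
  rintro x ⟨hx, hxY⟩
  exact (Tcheck_subset_union hn hx).resolve_right hxY

theorem ncard_cutSet : (cutSet n).ncard = n - 1 := by
  rw [cutSet, InjOn.ncard_image]
  · exact (ncard_Icc_nat 1 (n - 1)).trans (by omega)
  · rintro k ⟨hk, hkn⟩ l - hkl
    have hn : (n : ℝ) ≠ 0 := by norm_cast; omega
    simpa only [cutPoint, div_left_inj' hn, Nat.cast_inj] using congrArg Prod.snd hkl

theorem isConnected_Tcheck (hn : Even n) (hn2 : 2 ≤ n) : IsConnected (Tcheck n) := by
  have h1 : cutPoint n 1 ∈ cutSet n := cutPoint_mem_cutSet le_rfl hn2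
  refine ⟨⟨_, cutSet_subset_Tcheck hn h1⟩, ?_⟩
  simpa using isPreconnected_Tcheck_diff hn (empty_subset _) h1 (notMem_empty _)

theorem isIrredCutSet_cutSet (hn : Even n) (hn2 : 2 ≤ n) : IsIrredCutSet (Tcheck n) (cutSet n) := by
  refine ⟨⟨cutSet_subset_Tcheck hn, sepUnion_Tcheck_diff_cutSet hn hn2⟩, fun X₀ hX₀ _ => ?_⟩
  obtain ⟨y, hy, hyX⟩ := exists_of_ssubset hX₀
  exact not_sepUnion_of_isPreconnected (isPreconnected_Tcheck_diff hn hX₀.subset hy hyX)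

end Checkerboard

theorem statement8 (n : ℕ) (hn : 2 ≤ n) (heven : Even n) :
    IsConnected (Tcheck n) ∧
      IsIrredCutSet (Tcheck n)
        ((fun k : ℕ => ((((n : ℝ) - (k : ℝ)) / n, (k : ℝ) / n) : ℝ × ℝ)) ''
          {k : ℕ | 1 ≤ k ∧ k ≤ n - 1}) ∧
      ((fun k : ℕ => ((((n : ℝ) - (k : ℝ)) / n, (k : ℝ) / n) : ℝ × ℝ)) ''
          {k : ℕ | 1 ≤ k ∧ k ≤ n - 1}).ncard = n - 1 :=
  ⟨Checkerboard.isConnected_Tcheck heven hn, Checkerboard.isIrredCutSet_cutSet heven hn,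
    Checkerboard.ncard_cutSet⟩
end

section
/- For every integer m ≥ 1 there exist a positive integer q, injective contractions f₁, …, f_q of ℝ² into itself (Lipschitz maps with some ratio < 1), a nonempty compact connected set T ⊆ ℝ² with T = f₁(T) ∪ ⋯ ∪ f_q(T), and an irreducible cut set X of T with #X = m. -/
open Set Filter Topology

/-
`T` is the attractor of `2m` maps of the triangle with vertices `A = (0,0)`, `B = (1,0)` and
`(1/2,1/2)`, each halving the first coordinate: `fL m i` fixes `A` and sends `B` to the cut point
`Cᵢ = (1/2, (i+1)/(2(m+1)))`, and `fR m i` is its mirror image under `x ↦ 1 - x`, sending `A` to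
`B` and `B` to `Cᵢ`. Left pieces `fL m i '' T` lie in `x ≤ 1/2`, right pieces in `x ≥ 1/2`, and a
left and a right piece can only meet in a cut point, so removing all the `Cᵢ` separates the two
halves. If a proper subset is removed, some surviving `Cⱼ` joins them, provided every piece stays
connected after losing its cut point, i.e. `T \ {B}` is connected. That holds because a point of
`T` near `B` lies in a right piece whose preimage is twice as far from `A`, and by the mirror
symmetry of `T` this is a point twice as far from `B`; induct on the distance.
-/
section Separation

variable {X : Type*} [TopologicalSpace X]

theorem IsPreconnected.not_sepUnion {S : Set X} (hS : IsPreconnected S) : ¬ SepUnion S := by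
  rintro ⟨U, V, rfl, hU, hV, hUV, hVU⟩
  obtain ⟨x, hx, hxU, hxV⟩ := isPreconnected_closed_iff.1 hS _ _ isClosed_closure
    isClosed_closure (union_subset_union subset_closure subset_closure)
    (hU.mono fun x hx => ⟨Or.inl hx, subset_closure hx⟩)
    (hV.mono fun x hx => ⟨Or.inr hx, subset_closure hx⟩)
  rcases hx with hx | hx
  · exact hVU.subset ⟨hx, hxV⟩
  · exact hUV.subset ⟨hxU, hx⟩

theorem sepUnion_of_isClosed {S A B : Set X} (hA : IsClosed A) (hB : IsClosed B)
    (hS : S ⊆ A ∪ B) (hAB : Disjoint S (A ∩ B)) (hSA : (S ∩ A).Nonempty)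
    (hSB : (S ∩ B).Nonempty) : SepUnion S := by
  refine ⟨S ∩ A, S ∩ B, ?_, hSA, hSB, ?_, ?_⟩
  · rw [← inter_union_distrib_left, inter_eq_left.2 hS]
  · refine eq_empty_of_subset_empty fun x ⟨hxA, hxS, hxB⟩ => hAB.le_bot
      ⟨hxS, closure_minimal inter_subset_right hA hxA, hxB⟩
  · refine eq_empty_of_subset_empty fun x ⟨⟨hxS, hxA⟩, hxB⟩ => hAB.le_bot
      ⟨hxS, hxA, closure_minimal inter_subset_right hB hxB⟩

theorem IsPreconnected.diff_of_inter_subset_singleton {A Y : Set X} {c : X}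
    (hA : IsPreconnected A) (hAc : IsPreconnected (A \ {c})) (hY : A ∩ Y ⊆ {c}) :
    IsPreconnected (A \ Y) := by
  rw [← sdiff_inter_self_eq_sdiff, inter_comm]
  rcases subset_singleton_iff_eq.1 hY with h | h <;> rw [h]
  · rwa [sdiff_empty]
  · exact hAc

theorem IsPreconnected.iInter_of_directed [T2Space X] {ι : Type*} [Nonempty ι] {K : ι → Set X}
    (hdir : Directed (· ⊇ ·) K) (hcpt : ∀ i, IsCompact (K i))
    (hconn : ∀ i, IsPreconnected (K i)) : IsPreconnected (⋂ i, K i) := by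
  have hK : IsCompact (⋂ i, K i) :=
    (hcpt (Classical.arbitrary ι)).of_isClosed_subset
      (isClosed_iInter fun i => (hcpt i).isClosed) (iInter_subset _ _)
  refine isPreconnected_closed_iff.2 fun t t' ht ht' hcover hne hne' => ?_
  by_contra hempty
  obtain ⟨u, v, hu, hv, htu, htv, huv⟩ := SeparatedNhds.of_isCompact_isCompact
    (hK.inter_right ht) (hK.inter_right ht')
    (disjoint_left.2 fun x ⟨hxK, hxt⟩ ⟨_, hxt'⟩ => hempty ⟨x, hxK, hxt, hxt'⟩)
  obtain ⟨i, hi⟩ := exists_subset_nhds_of_isCompact hdir hcpt fun x hx =>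
    (hu.union hv).mem_nhds ((hcover hx).imp (fun h => htu ⟨hx, h⟩) (fun h => htv ⟨hx, h⟩))
  obtain ⟨x, -, hxu, hxv⟩ := hconn i u v hu hv hi
    (hne.mono fun _ hx => ⟨mem_iInter.1 hx.1 i, htu hx⟩)
    (hne'.mono fun _ hx => ⟨mem_iInter.1 hx.1 i, htv hx⟩)
  exact disjoint_left.1 huv hxu hxv

end Separation

section Hutchinson

variable {α ι : Type*} (f : ι → α → α)

def hutchinson (S : Set α) : Set α := ⋃ i, f i '' S

theorem hutchinson_mono : Monotone (hutchinson f) :=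
  fun _ _ h => iUnion_mono fun _ => image_mono h

theorem IsCompact.hutchinson [TopologicalSpace α] [Finite ι] (hf : ∀ i, Continuous (f i))
    {S : Set α} (hS : IsCompact S) : IsCompact (hutchinson f S) :=
  isCompact_iUnion fun i => hS.image (hf i)

theorem hutchinson_iInter_iterate [Finite ι] (hf : ∀ i, Function.Injective (f i)) {S : Set α}
    (hS : hutchinson f S ⊆ S) :
    hutchinson f (⋂ n, (hutchinson f)^[n] S) = ⋂ n, (hutchinson f)^[n] S := by
  have hanti : Antitone fun n => (hutchinson f)^[n] S :=
    (hutchinson_mono f).antitone_iterate_of_map_le hS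
  calc hutchinson f (⋂ n, (hutchinson f)^[n] S)
      = ⋃ i, ⋂ n, f i '' (hutchinson f)^[n] S := by
        simp only [hutchinson, (hf _).injOn.image_iInter_eq]
    _ = ⋂ n, hutchinson f ((hutchinson f)^[n] S) :=
        (iInter_iUnion_of_antitone (s := fun i n => f i '' (hutchinson f)^[n] S)
          fun _ _ _ h => image_mono (hanti h)).symm
    _ = ⋂ n, (hutchinson f)^[n] S := by
        simp only [← Function.iterate_succ_apply' (hutchinson f)]
        exact hanti.iInf_nat_add 1

end Hutchinson

namespace CutSetIFS

def ptA : ℝ × ℝ := (0, 0)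

def ptB : ℝ × ℝ := (1, 0)

def reflect (p : ℝ × ℝ) : ℝ × ℝ := (1 - p.1, p.2)

def triangle : Set (ℝ × ℝ) := {p | 0 ≤ p.2 ∧ p.2 ≤ p.1 ∧ p.2 ≤ 1 - p.1}

variable (m : ℕ)

-- The denominator `2 (m + 1)` makes `fL m i` a `1/2`-contraction for the sup metric of `ℝ × ℝ`
-- and a self-map of `triangle`.
noncomputable def fL (i : Fin m) (p : ℝ × ℝ) : ℝ × ℝ :=
  (p.1 / 2, ((i + 1) * p.1 + p.2) / (2 * (m + 1)))

noncomputable def fR (i : Fin m) : ℝ × ℝ → ℝ × ℝ := reflect ∘ fL m i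

noncomputable def cutPt (i : Fin m) : ℝ × ℝ := (1 / 2, (i + 1) / (2 * (m + 1)))

noncomputable def maps : Fin m ⊕ Fin m → ℝ × ℝ → ℝ × ℝ := Sum.elim (fL m) (fR m)

noncomputable def attractor : Set (ℝ × ℝ) := ⋂ n, (hutchinson (maps m))^[n] triangle

noncomputable def leftPart : Set (ℝ × ℝ) := ⋃ i, fL m i '' attractor m

noncomputable def rightPart : Set (ℝ × ℝ) := ⋃ i, fR m i '' attractor m

noncomputable def cutSet : Set (ℝ × ℝ) := range (cutPt m)

variable {m}

theorem reflect_reflect (p : ℝ × ℝ) : reflect (reflect p) = p := by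
  simp [reflect]

theorem isometry_reflect : Isometry reflect :=
  Isometry.of_dist_eq fun p q => by
    simp only [reflect, Prod.dist_eq, Real.dist_eq, sub_sub_sub_cancel_left, abs_sub_comm]

theorem reflect_ptA : reflect ptA = ptB := by simp [reflect, ptA, ptB]

theorem reflect_cutPt (i : Fin m) : reflect (cutPt m i) = cutPt m i := by
  norm_num [reflect, cutPt]

theorem mapsTo_reflect_triangle : MapsTo reflect triangle triangle :=
  fun _ ⟨h₀, h₁, h₂⟩ => ⟨h₀, by simpa [reflect] using h₂, by simpa [reflect] using h₁⟩

theorem fL_ptA (i : Fin m) : fL m i ptA = ptA := by simp [fL, ptA]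

theorem fL_ptB (i : Fin m) : fL m i ptB = cutPt m i := by simp [fL, ptB, cutPt]

theorem fR_ptA (i : Fin m) : fR m i ptA = ptB := by
  simp [fR, fL_ptA, reflect_ptA]

theorem fR_ptB (i : Fin m) : fR m i ptB = cutPt m i := by
  simp [fR, fL_ptB, reflect_cutPt]

theorem cutPt_injective : Function.Injective (cutPt m) := by
  intro i j h
  have h₂ := congrArg Prod.snd h
  simp only [cutPt] at h₂
  rw [div_left_inj' (by positivity), add_left_inj, Nat.cast_inj] at h₂
  exact Fin.ext h₂

theorem injective_fL (i : Fin m) : Function.Injective (fL m i) := by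
  intro p q h
  simp only [fL, Prod.ext_iff] at h
  obtain ⟨h₁, h₂⟩ := h
  have h₁' : p.1 = q.1 := by linarith
  rw [h₁', div_left_inj' (by positivity), add_right_inj] at h₂
  exact Prod.ext h₁' h₂

theorem injective_fR (i : Fin m) : Function.Injective (fR m i) :=
  isometry_reflect.injective.comp (injective_fL i)

theorem lipschitzWith_fL (i : Fin m) : LipschitzWith (1 / 2) (fL m i) := by
  refine LipschitzWith.of_dist_le_mul fun p q => ?_
  have h₁ : |p.1 - q.1| ≤ dist p q := by rw [← Real.dist_eq]; exact le_max_left _ _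
  have h₂ : |p.2 - q.2| ≤ dist p q := by rw [← Real.dist_eq]; exact le_max_right _ _
  have hi : (i : ℝ) + 1 ≤ m := by exact_mod_cast i.isLt
  have hk : (0 : ℝ) < 2 * (m + 1) := by positivity
  have hsnd : |((i + 1) * p.1 + p.2) - ((i + 1) * q.1 + q.2)| ≤ (m + 1) * dist p q := calc
    _ = |(i + 1) * (p.1 - q.1) + (p.2 - q.2)| := by ring_nf
    _ ≤ (i + 1) * |p.1 - q.1| + |p.2 - q.2| := by
      refine (abs_add_le _ _).trans (le_of_eq ?_)
      rw [abs_mul, abs_of_nonneg (by positivity : (0 : ℝ) ≤ i + 1)]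
    _ ≤ (m + 1) * dist p q := by nlinarith [dist_nonneg (x := p) (y := q)]
  rw [Prod.dist_eq, Real.dist_eq, Real.dist_eq, NNReal.coe_div, NNReal.coe_one, NNReal.coe_two]
  refine max_le ?_ ?_ <;> simp only [fL]
  · rw [← sub_div, abs_div, abs_two]
    linarith
  · rw [← sub_div, abs_div, abs_of_pos hk, div_le_iff₀ hk]
    linarith

theorem lipschitzWith_fR (i : Fin m) : LipschitzWith (1 / 2) (fR m i) := by
  simpa [fR] using isometry_reflect.lipschitz.comp (lipschitzWith_fL i)

theorem mapsTo_fL_triangle (i : Fin m) : MapsTo (fL m i) triangle triangle := by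
  rintro p ⟨h₀, h₁, h₂⟩
  have hi : (i : ℝ) + 1 ≤ m := by exact_mod_cast i.isLt
  have hk : (0 : ℝ) < 2 * (m + 1) := by positivity
  simp only [triangle, fL, mem_ofPred_eq]
  refine ⟨div_nonneg (by nlinarith) hk.le, ?_, ?_⟩ <;> rw [div_le_iff₀ hk] <;> nlinarith

theorem mapsTo_fR_triangle (i : Fin m) : MapsTo (fR m i) triangle triangle :=
  mapsTo_reflect_triangle.comp (mapsTo_fL_triangle i)

theorem eq_ptB_of_mem_triangle {p : ℝ × ℝ} (hp : p ∈ triangle) (h : 1 ≤ p.1) : p = ptB :=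
  Prod.ext (by simp only [ptB]; linarith [hp.1, hp.2.2])
    (by simp only [ptB]; linarith [hp.1, hp.2.2])

theorem ptA_mem_triangle : ptA ∈ triangle := by simp [ptA, triangle]

theorem ptB_mem_triangle : ptB ∈ triangle := by simp [ptB, triangle]

theorem isCompact_triangle : IsCompact triangle := by
  refine (isCompact_Icc.prod isCompact_Icc).of_isClosed_subset (s := Icc (0 : ℝ) 1 ×ˢ Icc 0 1) ?_ ?_
  · exact (isClosed_le continuous_const continuous_snd).inter
      ((isClosed_le continuous_snd continuous_fst).inter
        (isClosed_le continuous_snd (continuous_const.sub continuous_fst)))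
  · rintro p ⟨h₀, h₁, h₂⟩
    exact ⟨⟨by linarith, by linarith⟩, h₀, by linarith⟩

theorem convex_triangle : Convex ℝ triangle := by
  rintro p ⟨hp₀, hp₁, hp₂⟩ q ⟨hq₀, hq₁, hq₂⟩ a b ha hb hab
  simp only [triangle, mem_ofPred_eq, Prod.fst_add, Prod.snd_add, Prod.smul_fst, Prod.smul_snd,
    smul_eq_mul]
  refine ⟨by positivity, by nlinarith, by nlinarith⟩

theorem dist_ptB_le_one {p : ℝ × ℝ} (hp : p ∈ triangle) : dist p ptB ≤ 1 := by
  obtain ⟨h₀, h₁, h₂⟩ := hp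
  rw [Prod.dist_eq, Real.dist_eq, Real.dist_eq, max_le_iff, abs_le, abs_le]
  simp only [ptB]
  refine ⟨⟨?_, ?_⟩, ?_, ?_⟩ <;> linarith

theorem fst_le_of_mem_image_fL {i : Fin m} {p : ℝ × ℝ} (hp : p ∈ fL m i '' triangle) :
    p.1 ≤ 1 / 2 := by
  obtain ⟨q, hq, rfl⟩ := hp
  simp only [fL]
  linarith [hq.1, hq.2.2]

theorem eq_cutPt_of_mem_image_fL {i : Fin m} {p : ℝ × ℝ} (hp : p ∈ fL m i '' triangle)
    (h : 1 / 2 ≤ p.1) : p = cutPt m i := by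
  obtain ⟨q, hq, rfl⟩ := hp
  rw [eq_ptB_of_mem_triangle hq (by simp only [fL] at h; linarith), fL_ptB]

theorem le_fst_of_mem_image_fR {i : Fin m} {p : ℝ × ℝ} (hp : p ∈ fR m i '' triangle) :
    1 / 2 ≤ p.1 := by
  obtain ⟨q, hq, rfl⟩ := hp
  have := fst_le_of_mem_image_fL (mem_image_of_mem (fL m i) hq)
  simp only [fR, Function.comp_apply, reflect]
  linarith

theorem eq_cutPt_of_mem_image_fR {i : Fin m} {p : ℝ × ℝ} (hp : p ∈ fR m i '' triangle)
    (h : p.1 ≤ 1 / 2) : p = cutPt m i := by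
  obtain ⟨q, hq, rfl⟩ := hp
  have hL := eq_cutPt_of_mem_image_fL (mem_image_of_mem (fL m i) hq)
    (by simp only [fR, Function.comp_apply, reflect] at h; linarith)
  rw [fR, Function.comp_apply, hL, reflect_cutPt]

theorem eq_cutPt_of_mem_image_fL_of_mem_image_fR {i j : Fin m} {p : ℝ × ℝ}
    (hL : p ∈ fL m i '' triangle) (hR : p ∈ fR m j '' triangle) : p = cutPt m i :=
  eq_cutPt_of_mem_image_fL hL (le_fst_of_mem_image_fR hR)

theorem eq_of_cutPt_mem_image_fL {i l : Fin m} (h : cutPt m l ∈ fL m i '' triangle) : l = i :=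
  cutPt_injective (eq_cutPt_of_mem_image_fL h le_rfl)

theorem eq_of_cutPt_mem_image_fR {i l : Fin m} (h : cutPt m l ∈ fR m i '' triangle) : l = i :=
  cutPt_injective (eq_cutPt_of_mem_image_fR h le_rfl)

theorem ptA_notMem_cutSet : ptA ∉ cutSet m := by
  rintro ⟨i, hi⟩
  simpa [cutPt, ptA] using congrArg Prod.fst hi

theorem ptB_notMem_cutSet : ptB ∉ cutSet m := by
  rintro ⟨i, hi⟩
  norm_num [cutPt, ptB] at hi

theorem ncard_cutSet : (cutSet m).ncard = m := by
  rw [cutSet, ← image_univ, ncard_image_of_injective _ cutPt_injective, ncard_univ,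
    Nat.card_eq_fintype_card, Fintype.card_fin]

theorem hutchinson_maps (S : Set (ℝ × ℝ)) :
    hutchinson (maps m) S = (⋃ i, fL m i '' S) ∪ ⋃ i, fR m i '' S :=
  iUnion_sum

theorem hutchinson_triangle_subset : hutchinson (maps m) triangle ⊆ triangle := by
  rw [hutchinson_maps]
  exact union_subset (iUnion_subset fun i => (mapsTo_fL_triangle i).image_subset)
    (iUnion_subset fun i => (mapsTo_fR_triangle i).image_subset)

theorem reflect_image_hutchinson (S : Set (ℝ × ℝ)) :
    reflect '' hutchinson (maps m) S = hutchinson (maps m) S := by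
  have hLR (i : Fin m) : reflect '' (fL m i '' S) = fR m i '' S := (image_comp _ _ _).symm
  have hRL (i : Fin m) : reflect '' (fR m i '' S) = fL m i '' S := by
    rw [← hLR, image_image, image_congr fun p _ => reflect_reflect p, image_id']
  simp only [hutchinson_maps, image_union, image_iUnion, hLR, hRL, union_comm]

theorem reflect_image_triangle : reflect '' triangle = triangle :=
  mapsTo_reflect_triangle.image_subset.antisymm fun p hp =>
    ⟨reflect p, mapsTo_reflect_triangle hp, reflect_reflect p⟩

theorem lipschitzWith_maps (ι : Fin m ⊕ Fin m) : LipschitzWith (1 / 2) (maps m ι) :=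
  ι.rec lipschitzWith_fL lipschitzWith_fR

theorem injective_maps (ι : Fin m ⊕ Fin m) : Function.Injective (maps m ι) :=
  ι.rec injective_fL injective_fR

theorem hutchinson_attractor : hutchinson (maps m) (attractor m) = attractor m :=
  hutchinson_iInter_iterate _ injective_maps hutchinson_triangle_subset

theorem attractor_eq_union : attractor m = leftPart m ∪ rightPart m :=
  hutchinson_attractor.symm.trans (hutchinson_maps _)

theorem image_fL_attractor_subset (i : Fin m) : fL m i '' attractor m ⊆ attractor m := by
  conv_rhs => rw [attractor_eq_union]
  exact subset_union_of_subset_left (subset_iUnion (fun i => fL m i '' attractor m) i) _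

theorem image_fR_attractor_subset (i : Fin m) : fR m i '' attractor m ⊆ attractor m := by
  conv_rhs => rw [attractor_eq_union]
  exact subset_union_of_subset_right (subset_iUnion (fun i => fR m i '' attractor m) i) _

theorem attractor_subset_triangle : attractor m ⊆ triangle := iInter_subset _ 0

theorem isCompact_iterate (n : ℕ) : IsCompact ((hutchinson (maps m))^[n] triangle) := by
  induction n with
  | zero => exact isCompact_triangle
  | succ n ih =>
    rw [Function.iterate_succ_apply']
    exact ih.hutchinson _ fun ι => (lipschitzWith_maps ι).continuous

theorem isCompact_attractor : IsCompact (attractor m) :=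
  isCompact_triangle.of_isClosed_subset (isClosed_iInter fun n => (isCompact_iterate n).isClosed)
    attractor_subset_triangle

theorem reflect_image_attractor : reflect '' attractor m = attractor m := by
  rw [attractor, isometry_reflect.injective.injOn.image_iInter_eq]
  refine iInter_congr fun n => ?_
  cases n with
  | zero => exact reflect_image_triangle
  | succ n => rw [Function.iterate_succ_apply', reflect_image_hutchinson]

theorem reflect_mem_attractor {p : ℝ × ℝ} (hp : p ∈ attractor m) : reflect p ∈ attractor m :=
  reflect_image_attractor (m := m) ▸ mem_image_of_mem reflect hp

theorem isPreconnected_hutchinson {S : Set (ℝ × ℝ)} (hS : IsPreconnected S) (hA : ptA ∈ S)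
    (hB : ptB ∈ S) : IsPreconnected (hutchinson (maps m) S) := by
  rw [hutchinson_maps, ← iUnion_union_distrib]
  refine isPreconnected_iUnion ⟨ptA, mem_iInter.2 fun i => .inl ⟨ptA, hA, fL_ptA i⟩⟩ fun i => ?_
  exact (hS.image _ (lipschitzWith_fL i).continuous.continuousOn).union (cutPt m i)
    ⟨ptB, hB, fL_ptB i⟩ ⟨ptB, hB, fR_ptB i⟩
    (hS.image _ (lipschitzWith_fR i).continuous.continuousOn)

theorem isCompact_leftPart : IsCompact (leftPart m) :=
  isCompact_iUnion fun i => isCompact_attractor.image (lipschitzWith_fL i).continuous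

theorem isCompact_rightPart : IsCompact (rightPart m) :=
  isCompact_iUnion fun i => isCompact_attractor.image (lipschitzWith_fR i).continuous

theorem leftPart_inter_rightPart_subset : leftPart m ∩ rightPart m ⊆ cutSet m := by
  rintro p ⟨hL, hR⟩
  obtain ⟨i, hi⟩ := mem_iUnion.1 hL
  obtain ⟨j, hj⟩ := mem_iUnion.1 hR
  exact ⟨i, (eq_cutPt_of_mem_image_fL_of_mem_image_fR (image_mono attractor_subset_triangle hi)
    (image_mono attractor_subset_triangle hj)).symm⟩

theorem ptB_notMem_leftPart : ptB ∉ leftPart m := fun h => by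
  obtain ⟨i, hi⟩ := mem_iUnion.1 h
  have := fst_le_of_mem_image_fL (image_mono attractor_subset_triangle hi)
  norm_num [ptB] at this

theorem dist_fR_ptB_le (i : Fin m) (p : ℝ × ℝ) :
    dist (fR m i p) ptB ≤ dist (reflect p) ptB / 2 := calc
  dist (fR m i p) ptB = dist (fR m i p) (fR m i ptA) := by rw [fR_ptA]
  _ ≤ 1 / 2 * dist p ptA := by simpa using (lipschitzWith_fR i).dist_le_mul p ptA
  _ = dist (reflect p) ptB / 2 := by rw [← reflect_ptA, isometry_reflect.dist_eq]; ring

theorem fR_reflect_mem_attractor_diff_ptB (i : Fin m) {p : ℝ × ℝ}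
    (hp : p ∈ attractor m \ {ptB}) : fR m i (reflect p) ∈ attractor m \ {ptB} := by
  refine ⟨image_fR_attractor_subset i ⟨_, reflect_mem_attractor hp.1, rfl⟩, fun h => hp.2 ?_⟩
  have hA : reflect p = ptA := injective_fR i (h.trans (fR_ptA i).symm)
  rw [← reflect_reflect p, hA, reflect_ptA, mem_singleton_iff]

theorem leftPart_subset_attractor_diff_ptB : leftPart m ⊆ attractor m \ {ptB} := fun _ hp =>
  ⟨attractor_eq_union (m := m) ▸ subset_union_left hp, fun h => ptB_notMem_leftPart (h ▸ hp)⟩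

variable [NeZero m]

theorem ptA_mem_hutchinson {S : Set (ℝ × ℝ)} (h : ptA ∈ S) : ptA ∈ hutchinson (maps m) S :=
  mem_iUnion.2 ⟨.inl 0, ptA, h, fL_ptA 0⟩

theorem ptB_mem_hutchinson {S : Set (ℝ × ℝ)} (h : ptA ∈ S) : ptB ∈ hutchinson (maps m) S :=
  mem_iUnion.2 ⟨.inr 0, ptA, h, fR_ptA 0⟩

theorem ptA_mem_iterate (n : ℕ) : ptA ∈ (hutchinson (maps m))^[n] triangle := by
  induction n with
  | zero => exact ptA_mem_triangle
  | succ n ih => rw [Function.iterate_succ_apply']; exact ptA_mem_hutchinson ih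

theorem ptB_mem_iterate (n : ℕ) : ptB ∈ (hutchinson (maps m))^[n] triangle := by
  cases n with
  | zero => exact ptB_mem_triangle
  | succ n => rw [Function.iterate_succ_apply']; exact ptB_mem_hutchinson (ptA_mem_iterate n)

theorem ptA_mem_attractor : ptA ∈ attractor m := mem_iInter.2 ptA_mem_iterate

theorem ptB_mem_attractor : ptB ∈ attractor m := mem_iInter.2 ptB_mem_iterate

theorem cutPt_mem_attractor (i : Fin m) : cutPt m i ∈ attractor m :=
  image_fL_attractor_subset i ⟨ptB, ptB_mem_attractor, fL_ptB i⟩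

theorem isConnected_attractor : IsConnected (attractor m) := by
  refine ⟨⟨ptA, ptA_mem_attractor⟩, IsPreconnected.iInter_of_directed ?_ ?_ fun n => ?_⟩
  · exact ((hutchinson_mono _).antitone_iterate_of_map_le hutchinson_triangle_subset).directed_ge
  · exact isCompact_iterate
  induction n with
  | zero => exact convex_triangle.isPreconnected
  | succ n ih =>
    rw [Function.iterate_succ_apply']
    exact isPreconnected_hutchinson ih (ptA_mem_iterate n) (ptB_mem_iterate n)

theorem ptA_mem_leftPart : ptA ∈ leftPart m := mem_iUnion.2 ⟨0, ptA, ptA_mem_attractor, fL_ptA 0⟩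

theorem ptB_mem_rightPart : ptB ∈ rightPart m := mem_iUnion.2 ⟨0, ptA, ptA_mem_attractor, fR_ptA 0⟩

theorem isPreconnected_leftPart : IsPreconnected (leftPart m) :=
  isPreconnected_iUnion ⟨ptA, mem_iInter.2 fun i => ⟨ptA, ptA_mem_attractor, fL_ptA i⟩⟩ fun i =>
    isConnected_attractor.isPreconnected.image _ (lipschitzWith_fL i).continuous.continuousOn

theorem exists_isPreconnected_of_pow_lt_dist (n : ℕ) {p : ℝ × ℝ} (hp : p ∈ attractor m)
    (hpn : (1 / 2 : ℝ) ^ n < dist p ptB) :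
    ∃ C ⊆ attractor m \ {ptB}, ptA ∈ C ∧ p ∈ C ∧ IsPreconnected C := by
  induction n generalizing p with
  | zero =>
    exact absurd (dist_ptB_le_one (attractor_subset_triangle hp)) (by simpa using hpn)
  | succ n ih =>
    rw [attractor_eq_union] at hp
    rcases hp with hp | hp
    · exact ⟨leftPart m, leftPart_subset_attractor_diff_ptB, ptA_mem_leftPart, hp,
        isPreconnected_leftPart⟩
    obtain ⟨i, s, hs, rfl⟩ := mem_iUnion.1 hp
    obtain ⟨C, hC, hAC, hsC, hCconn⟩ := ih (reflect_mem_attractor hs) (by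
      have := dist_fR_ptB_le i s
      rw [pow_succ] at hpn
      linarith)
    refine ⟨leftPart m ∪ fR m i '' (reflect '' C), union_subset
      leftPart_subset_attractor_diff_ptB ?_, .inl ptA_mem_leftPart,
      .inr ⟨s, ⟨reflect s, hsC, reflect_reflect s⟩, rfl⟩,
      isPreconnected_leftPart.union (cutPt m i) ?_ ?_ ?_⟩
    · rintro _ ⟨_, ⟨q, hq, rfl⟩, rfl⟩
      exact fR_reflect_mem_attractor_diff_ptB i (hC hq)
    · exact mem_iUnion.2 ⟨i, ptB, ptB_mem_attractor, fL_ptB i⟩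
    · exact ⟨reflect ptA, ⟨ptA, hAC, rfl⟩, by rw [reflect_ptA, fR_ptB]⟩
    · exact (hCconn.image _ isometry_reflect.continuous.continuousOn).image _
        (lipschitzWith_fR i).continuous.continuousOn

theorem isPreconnected_attractor_diff_ptB : IsPreconnected (attractor m \ {ptB}) :=
  isPreconnected_of_forall ptA fun p ⟨hp, hpB⟩ => by
    obtain ⟨n, hn⟩ := exists_pow_lt_of_lt_one (dist_pos.2 hpB) (by norm_num : (1 / 2 : ℝ) < 1)
    exact exists_isPreconnected_of_pow_lt_dist n hp hn

theorem isPreconnected_image_fL_diff {Y : Set (ℝ × ℝ)} (hY : Y ⊆ cutSet m) (i : Fin m) :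
    IsPreconnected (fL m i '' attractor m \ Y) := by
  have hfL : Continuous (fL m i) := (lipschitzWith_fL i).continuous
  refine (isConnected_attractor.isPreconnected.image _ hfL.continuousOn)
    |>.diff_of_inter_subset_singleton (c := cutPt m i) ?_ fun p ⟨hp, hpY⟩ => ?_
  · rw [← fL_ptB i, ← image_singleton, ← image_sdiff (injective_fL i)]
    exact isPreconnected_attractor_diff_ptB.image _ hfL.continuousOn
  · obtain ⟨l, rfl⟩ := hY hpY
    rw [eq_of_cutPt_mem_image_fL (image_mono attractor_subset_triangle hp), mem_singleton_iff]

theorem isPreconnected_image_fR_diff {Y : Set (ℝ × ℝ)} (hY : Y ⊆ cutSet m) (i : Fin m) :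
    IsPreconnected (fR m i '' attractor m \ Y) := by
  have hfR : Continuous (fR m i) := (lipschitzWith_fR i).continuous
  refine (isConnected_attractor.isPreconnected.image _ hfR.continuousOn)
    |>.diff_of_inter_subset_singleton (c := cutPt m i) ?_ fun p ⟨hp, hpY⟩ => ?_
  · rw [← fR_ptB i, ← image_singleton, ← image_sdiff (injective_fR i)]
    exact isPreconnected_attractor_diff_ptB.image _ hfR.continuousOn
  · obtain ⟨l, rfl⟩ := hY hpY
    rw [eq_of_cutPt_mem_image_fR (image_mono attractor_subset_triangle hp), mem_singleton_iff]

theorem isPreconnected_attractor_diff {Y : Set (ℝ × ℝ)} (hY : Y ⊂ cutSet m) :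
    IsPreconnected (attractor m \ Y) := by
  obtain ⟨_, ⟨j, rfl⟩, hj⟩ := exists_of_ssubset hY
  rw [attractor_eq_union, union_sdiff_distrib, leftPart, rightPart, iUnion_sdiff, iUnion_sdiff]
  refine IsPreconnected.union (cutPt m j) (mem_iUnion.2 ⟨j, ⟨ptB, ptB_mem_attractor, fL_ptB j⟩, hj⟩)
    (mem_iUnion.2 ⟨j, ⟨ptB, ptB_mem_attractor, fR_ptB j⟩, hj⟩) ?_ ?_
  · refine isPreconnected_iUnion ⟨ptA, mem_iInter.2 fun i => ?_⟩
      (isPreconnected_image_fL_diff hY.subset)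
    exact ⟨⟨ptA, ptA_mem_attractor, fL_ptA i⟩, fun h => ptA_notMem_cutSet (hY.subset h)⟩
  · refine isPreconnected_iUnion ⟨ptB, mem_iInter.2 fun i => ?_⟩
      (isPreconnected_image_fR_diff hY.subset)
    exact ⟨⟨ptA, ptA_mem_attractor, fR_ptA i⟩, fun h => ptB_notMem_cutSet (hY.subset h)⟩

theorem isIrredCutSet_cutSet : IsIrredCutSet (attractor m) (cutSet m) := by
  refine ⟨⟨range_subset_iff.2 cutPt_mem_attractor, ?_⟩,
    fun Y hY _ => (isPreconnected_attractor_diff hY).not_sepUnion⟩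
  refine sepUnion_of_isClosed isCompact_leftPart.isClosed isCompact_rightPart.isClosed
    (sdiff_subset.trans attractor_eq_union.subset)
    (disjoint_sdiff_left.mono_right leftPart_inter_rightPart_subset) ?_ ?_
  · exact ⟨ptA, ⟨ptA_mem_attractor, ptA_notMem_cutSet⟩, ptA_mem_leftPart⟩
  · exact ⟨ptB, ⟨ptB_mem_attractor, ptB_notMem_cutSet⟩, ptB_mem_rightPart⟩

end CutSetIFS

theorem statement9 (m : ℕ) (hm : 1 ≤ m) :
    ∃ (q : ℕ) (f : Fin q → ℝ × ℝ → ℝ × ℝ), 0 < q ∧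
      (∀ i, Function.Injective (f i)) ∧
      (∀ i, ∃ K, ContractingWith K (f i)) ∧
      ∃ T : Set (ℝ × ℝ), T.Nonempty ∧ IsCompact T ∧ IsConnected T ∧
        T = ⋃ i, f i '' T ∧
        ∃ X : Set (ℝ × ℝ), IsIrredCutSet T X ∧ X.ncard = m := by
  have : NeZero m := ⟨by omega⟩
  refine ⟨m + m, CutSetIFS.maps m ∘ finSumFinEquiv.symm, by omega,
    fun _ => CutSetIFS.injective_maps _,
    fun _ => ⟨1 / 2, by norm_num, CutSetIFS.lipschitzWith_maps _⟩,
    CutSetIFS.attractor m, ⟨_, CutSetIFS.ptA_mem_attractor⟩, CutSetIFS.isCompact_attractor,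
    CutSetIFS.isConnected_attractor, ?_, CutSetIFS.cutSet m, CutSetIFS.isIrredCutSet_cutSet,
    CutSetIFS.ncard_cutSet⟩
  exact CutSetIFS.hutchinson_attractor.symm.trans
    (finSumFinEquiv.symm.surjective.iUnion_comp _).symm
end

section
/- Let A be the 2×2 integer matrix with rows (0, 3) and (1, 1), let D := {(0,0), (1,0), (−1,0)} ⊂ ℤ², and let T = T(A,D) be the unique nonempty compact subset of ℝ² with A·T = T + D. Then for every s ∈ ℤ² with s ≠ 0, T ∩ (T+s) ≠ ∅ if and only if s ∈ {±(1,0), ±(−2,1), ±(−1,1), ±(−4,2), ±(−3,1)}. -/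
/-!
The neighbours of `T` are the `s` with `s ∈ T - T`. Applying `A·T = T + D` to a point of
`T ∩ (T + s)` shows that with `s` also some `A s + (e - e')`, `e, e' ∈ D`, is a neighbour, and
conversely, `A` being invertible. Since `T ⊆ [-2, 2] × [-1, 1]`, every neighbour lies in a finite
box and has a successor `A s + (e - e')` among the neighbours; three rounds of discarding the points
without a successor among the remaining ones leave exactly the ten listed vectors (and `0`).
Conversely, each listed vector lies on a cycle `s → s₁ → s` of this successor relation or leads
into one; such an `s` is the fixed point of `z ↦ A⁻¹ (A⁻¹ (z - c₂) - c₁)`, a contraction (`A⁻²` has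
sup-norm `7/9`) mapping the closed set `T - T` into itself, so `s ∈ T - T`.
-/

open Set Filter Topology Matrix

noncomputable section

/-- The real matrix obtained from an integer matrix. -/
def rmat {d : ℕ} (A : Matrix (Fin d) (Fin d) ℤ) : Matrix (Fin d) (Fin d) ℝ :=
  A.map Int.cast

/-- The real vector obtained from an integer vector. -/
def rvec {d : ℕ} (v : Fin d → ℤ) : Fin d → ℝ := fun i => (v i : ℝ)

/-- The translate `T + v` of `T` by a lattice vector `v`. -/
def trT {d : ℕ} (T : Set (Fin d → ℝ)) (v : Fin d → ℤ) : Set (Fin d → ℝ) :=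
  (fun x => x + rvec v) '' T

/-- Every complex eigenvalue of `A` has modulus `> 1`. -/
def Expanding {d : ℕ} (A : Matrix (Fin d) (Fin d) ℤ) : Prop :=
  ∀ μ : ℂ, Module.End.HasEigenvalue (Matrix.toLin' (A.map (Int.cast : ℤ → ℂ))) μ →
    1 < ‖μ‖

/-- `D` is a complete set of coset representatives of `ℤ^d / A ℤ^d`. -/
def ResidueSystem {d : ℕ} (A : Matrix (Fin d) (Fin d) ℤ) (D : Set (Fin d → ℤ)) : Prop :=
  ∀ x : Fin d → ℤ, ∃! e, e ∈ D ∧ ∃ y : Fin d → ℤ, x = A.mulVec y + e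

/-- `T` is the attractor `T(A,D)`: nonempty, compact, with `A·T = T + D`. -/
def SelfAffine {d : ℕ} (A : Matrix (Fin d) (Fin d) ℤ) (D : Set (Fin d → ℤ))
    (T : Set (Fin d → ℝ)) : Prop :=
  T.Nonempty ∧ IsCompact T ∧
    (rmat A).mulVec '' T = ⋃ e ∈ D, (fun x => x + rvec e) '' T

/-- `T = T(A,D)` is a `ℤ^d`-tile: a self-affine attractor for an expanding integer
matrix and a standard digit set, with nonempty interior, tiling `ℝ^d` by `ℤ^d`. -/
def IsZdTile {d : ℕ} (A : Matrix (Fin d) (Fin d) ℤ) (D : Set (Fin d → ℤ))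
    (T : Set (Fin d → ℝ)) : Prop :=
  Expanding A ∧ ResidueSystem A D ∧ SelfAffine A D T ∧ (interior T).Nonempty ∧
    (⋃ v : Fin d → ℤ, trT T v) = univ ∧
    Pairwise fun v₁ v₂ : Fin d → ℤ => interior (trT T v₁) ∩ trT T v₂ = ∅

/-- `V_n = D + A·D + ⋯ + A^{n-1}·D`, the vertex set of the `n`-th Hata graph. -/
def Vset {d : ℕ} (A : Matrix (Fin d) (Fin d) ℤ) (D : Set (Fin d → ℤ)) (n : ℕ) :
    Set (Fin d → ℤ) :=
  {v | ∃ dig : Fin n → (Fin d → ℤ), (∀ k, dig k ∈ D) ∧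
    v = ∑ k : Fin n, (A ^ (k : ℕ)).mulVec (dig k)}

/-- The set of children `C(U) = A·U + D`. -/
def childSet {d : ℕ} (A : Matrix (Fin d) (Fin d) ℤ) (D : Set (Fin d → ℤ))
    (U : Set (Fin d → ℤ)) : Set (Fin d → ℤ) :=
  {w | ∃ u ∈ U, ∃ e ∈ D, w = A.mulVec u + e}

/-- `X_n(W) = ⋃_{v ∈ W} A^{-n}(T + v)`. -/
def XnSet {d : ℕ} (A : Matrix (Fin d) (Fin d) ℤ) (T : Set (Fin d → ℝ)) (n : ℕ)
    (W : Set (Fin d → ℤ)) : Set (Fin d → ℝ) :=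
  ⋃ v ∈ W, ((rmat A)⁻¹ ^ n).mulVec '' trT T v

/-- The subgraph of the `n`-th Hata graph induced on `W` is connected:
any two vertices of `W` are joined by a path inside `W`, consecutive tiles meeting. -/
def HataConn {d : ℕ} (T : Set (Fin d → ℝ)) (W : Set (Fin d → ℤ)) : Prop :=
  ∀ v ∈ W, ∀ w ∈ W,
    Relation.ReflTransGen (fun a b => a ∈ W ∧ b ∈ W ∧ (trT T a ∩ trT T b).Nonempty) v w

open Function
open scoped Pointwise NNReal

theorem ContractingWith.mem_of_isFixedPt {α : Type*} [MetricSpace α] [CompleteSpace α]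
    {K : ℝ≥0} {f : α → α} (hf : ContractingWith K f) {S : Set α} (hS : IsClosed S)
    (hne : S.Nonempty) (hfS : MapsTo f S S) {p : α} (hp : IsFixedPt f p) : p ∈ S := by
  obtain ⟨x, hx⟩ := hne
  have : Nonempty α := ⟨x⟩
  have hlim := hf.tendsto_iterate_fixedPoint x
  rw [← hf.fixedPoint_unique hp] at hlim
  exact hS.mem_of_tendsto hlim (Eventually.of_forall fun n => hfS.iterate n hx)

theorem neg_mem_sub_self {G : Type*} [AddGroup G] {T : Set G} {z : G} (hz : z ∈ T - T) :
    -z ∈ T - T := by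
  obtain ⟨x, hx, y, hy, rfl⟩ := hz
  exact ⟨y, hy, x, hx, (neg_sub x y).symm⟩

section Lattice

variable {d : ℕ}

@[simp]
theorem rvec_add (v w : Fin d → ℤ) : rvec (v + w) = rvec v + rvec w := by
  ext; simp [rvec]

@[simp]
theorem rvec_sub (v w : Fin d → ℤ) : rvec (v - w) = rvec v - rvec w := by
  ext; simp [rvec]

@[simp]
theorem rvec_neg (v : Fin d → ℤ) : rvec (-v) = -rvec v := by
  ext; simp [rvec]

@[simp]
theorem rvec_mulVec (A : Matrix (Fin d) (Fin d) ℤ) (v : Fin d → ℤ) :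
    rvec (A *ᵥ v) = rmat A *ᵥ rvec v := by
  ext i; exact RingHom.map_mulVec (Int.castRingHom ℝ) A v i

theorem inv_mulVec_rvec_mulVec {A : Matrix (Fin d) (Fin d) ℤ} (hA : IsUnit (rmat A).det)
    (s : Fin d → ℤ) : (rmat A)⁻¹ *ᵥ rvec (A *ᵥ s) = rvec s := by
  rw [rvec_mulVec, Matrix.mulVec_mulVec, Matrix.nonsing_inv_mul _ hA, Matrix.one_mulVec]

theorem nonempty_inter_trT_iff (T : Set (Fin d → ℝ)) (s : Fin d → ℤ) :
    (T ∩ trT T s).Nonempty ↔ rvec s ∈ T - T := by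
  constructor
  · rintro ⟨_, hx, y, hy, rfl⟩
    exact ⟨_, hx, y, hy, add_sub_cancel_left y (rvec s)⟩
  · rintro ⟨x, hx, y, hy, hs⟩
    exact ⟨x, hx, y, hy, by simp only [← hs, add_sub_cancel]⟩

def prune (A : Matrix (Fin d) (Fin d) ℤ) (E W : Finset (Fin d → ℤ)) : Finset (Fin d → ℤ) :=
  W.filter fun s => ∃ c ∈ E, A *ᵥ s + c ∈ W

end Lattice

namespace SelfAffine

variable {d : ℕ} {A : Matrix (Fin d) (Fin d) ℤ} {D : Set (Fin d → ℤ)} {T : Set (Fin d → ℝ)}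

theorem exists_mulVec_eq_add_of_mem (h : SelfAffine A D T) {x : Fin d → ℝ} (hx : x ∈ T) :
    ∃ u ∈ T, ∃ e ∈ D, rmat A *ᵥ x = u + rvec e := by
  have hAx : rmat A *ᵥ x ∈ ⋃ e ∈ D, (fun t => t + rvec e) '' T := h.2.2 ▸ mem_image_of_mem _ hx
  simp only [mem_iUnion, exists_prop] at hAx
  obtain ⟨e, he, u, hu, hux⟩ := hAx
  exact ⟨u, hu, e, he, hux.symm⟩

theorem exists_mem_mulVec_eq_add (h : SelfAffine A D T) {u : Fin d → ℝ} (hu : u ∈ T)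
    {e : Fin d → ℤ} (he : e ∈ D) : ∃ x ∈ T, rmat A *ᵥ x = u + rvec e := by
  have hue : u + rvec e ∈ ⋃ e ∈ D, (fun t => t + rvec e) '' T :=
    mem_biUnion he (mem_image_of_mem _ hu)
  rw [← h.2.2] at hue
  exact hue

theorem isClosed_sub_self (h : SelfAffine A D T) : IsClosed (T - T) := by
  rw [← sub_image_prod]
  exact ((h.2.1.prod h.2.1).image continuous_sub).isClosed

theorem exists_mulVec_add_sub_mem_sub_self (h : SelfAffine A D T) {s : Fin d → ℤ}
    (hs : rvec s ∈ T - T) : ∃ e ∈ D, ∃ e' ∈ D, rvec (A *ᵥ s + (e - e')) ∈ T - T := by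
  obtain ⟨x, hx, y, hy, hxy⟩ := hs
  obtain ⟨u, hu, e', he', hAx⟩ := h.exists_mulVec_eq_add_of_mem hx
  obtain ⟨v, hv, e, he, hAy⟩ := h.exists_mulVec_eq_add_of_mem hy
  have hxy : x - y = rvec s := hxy
  have huv : rvec (A *ᵥ s + (e - e')) = u - v := by
    rw [rvec_add, rvec_sub, rvec_mulVec, ← hxy, Matrix.mulVec_sub, hAx, hAy]
    abel
  exact ⟨e, he, e', he', huv ▸ sub_mem_sub hu hv⟩

theorem mapsTo_sub_self (h : SelfAffine A D T) (hA : IsUnit (rmat A).det)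
    {e e' : Fin d → ℤ} (he : e ∈ D) (he' : e' ∈ D) :
    MapsTo (fun z => (rmat A)⁻¹ *ᵥ (z - (rvec e - rvec e'))) (T - T) (T - T) := by
  rintro _ ⟨u, hu, v, hv, rfl⟩
  obtain ⟨x, hx, hAx⟩ := h.exists_mem_mulVec_eq_add hu he'
  obtain ⟨y, hy, hAy⟩ := h.exists_mem_mulVec_eq_add hv he
  have hxy : u - v - (rvec e - rvec e') = rmat A *ᵥ (x - y) := by
    rw [Matrix.mulVec_sub, hAx, hAy]
    abel
  simpa only [hxy, Matrix.mulVec_mulVec, Matrix.nonsing_inv_mul _ hA, Matrix.one_mulVec]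
    using sub_mem_sub hx hy

theorem rvec_mem_sub_self_of_mulVec_add (h : SelfAffine A D T) (hA : IsUnit (rmat A).det)
    {e e' s s' : Fin d → ℤ} (he : e ∈ D) (he' : e' ∈ D) (hs : A *ᵥ s + (e - e') = s')
    (hs' : rvec s' ∈ T - T) : rvec s ∈ T - T := by
  have := h.mapsTo_sub_self hA he he' (hs ▸ hs')
  simp only [← rvec_sub] at this
  rwa [add_sub_cancel_right, inv_mulVec_rvec_mulVec hA] at this

theorem rvec_mem_sub_self_of_cycle (h : SelfAffine A D T) (hA : IsUnit (rmat A).det)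
    {K : ℝ≥0} (hK : K < 1) (hcontr : ∀ v, ‖((rmat A)⁻¹ * (rmat A)⁻¹) *ᵥ v‖ ≤ K * ‖v‖)
    {e₁ e₁' e₂ e₂' s : Fin d → ℤ} (he₁ : e₁ ∈ D) (he₁' : e₁' ∈ D) (he₂ : e₂ ∈ D)
    (he₂' : e₂' ∈ D) (hs : A *ᵥ (A *ᵥ s + (e₁ - e₁')) + (e₂ - e₂') = s) :
    rvec s ∈ T - T := by
  let back (e e' : Fin d → ℤ) (z : Fin d → ℝ) : Fin d → ℝ :=
    (rmat A)⁻¹ *ᵥ (z - (rvec e - rvec e'))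
  have hback (e e' t : Fin d → ℤ) : back e e' (rvec (A *ᵥ t + (e - e'))) = rvec t := by
    simp only [back, ← rvec_sub, add_sub_cancel_right, inv_mulVec_rvec_mulVec hA]
  have hf : ContractingWith K (back e₁ e₁' ∘ back e₂ e₂') := by
    refine ⟨hK, LipschitzWith.of_dist_le_mul fun z w => ?_⟩
    simpa only [dist_eq_norm, Function.comp_apply, back, ← Matrix.mulVec_sub,
      sub_sub_sub_cancel_right, Matrix.mulVec_mulVec] using hcontr (z - w)
  have hfix : IsFixedPt (back e₁ e₁' ∘ back e₂ e₂') (rvec s) := by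
    unfold IsFixedPt
    nth_rewrite 1 [← hs]
    rw [Function.comp_apply, hback, hback]
  obtain ⟨x, hx⟩ := h.1
  exact hf.mem_of_isFixedPt h.isClosed_sub_self ⟨x - x, sub_mem_sub hx hx⟩
    ((h.mapsTo_sub_self hA he₁ he₁').comp (h.mapsTo_sub_self hA he₂ he₂')) hfix

theorem mem_prune_iterate (h : SelfAffine A D T) {E W : Finset (Fin d → ℤ)}
    (hE : ∀ e ∈ D, ∀ e' ∈ D, e - e' ∈ E) (hW : ∀ s, rvec s ∈ T - T → s ∈ W) (n : ℕ)
    {s : Fin d → ℤ} (hs : rvec s ∈ T - T) : s ∈ (prune A E)^[n] W := by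
  induction n generalizing s with
  | zero => exact hW s hs
  | succ n ih =>
    rw [iterate_succ_apply']
    obtain ⟨e, he, e', he', hAs⟩ := h.exists_mulVec_add_sub_mem_sub_self hs
    exact Finset.mem_filter.2 ⟨ih hs, e - e', hE e he e' he', ih hAs⟩

end SelfAffine

namespace ThreeDigitTile

abbrev A₀ : Matrix (Fin 2) (Fin 2) ℤ := !![0, 3; 1, 1]

abbrev D₀ : Set (Fin 2 → ℤ) := {![0, 0], ![1, 0], ![-1, 0]}

variable {T : Set (Fin 2 → ℝ)}

theorem rmat_A₀_mulVec (x : Fin 2 → ℝ) : rmat A₀ *ᵥ x = ![3 * x 1, x 0 + x 1] := by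
  ext i; fin_cases i <;> simp [rmat, Matrix.mulVec, dotProduct, Fin.sum_univ_two]

theorem exists_mem_coords_eq (h : SelfAffine A₀ D₀ T) {x : Fin 2 → ℝ} (hx : x ∈ T) :
    ∃ u ∈ T, ∃ c : ℝ, |c| ≤ 1 ∧ 3 * x 1 = u 0 + c ∧ x 0 + x 1 = u 1 := by
  obtain ⟨u, hu, e, he, hAx⟩ := h.exists_mulVec_eq_add_of_mem hx
  rw [rmat_A₀_mulVec] at hAx
  have hx0 : 3 * x 1 = u 0 + e 0 := congrFun hAx 0
  have hx1 : x 0 + x 1 = u 1 + e 1 := congrFun hAx 1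
  refine ⟨u, hu, e 0, ?_, hx0, ?_⟩
  · rcases he with rfl | rfl | rfl <;> norm_num
  · rcases he with rfl | rfl | rfl <;> simpa using hx1

-- With `a = sup |x 0|` over `T`, the set equation gives `|x 1| ≤ (a + 1) / 3` and then
-- `|x 0| ≤ 2 (a + 1) / 3`, whence `a ≤ 2`.
theorem abs_coord_le_of_mem (h : SelfAffine A₀ D₀ T) {x : Fin 2 → ℝ} (hx : x ∈ T) :
    |x 0| ≤ 2 ∧ |x 1| ≤ 1 := by
  have hbdd : BddAbove ((fun t => |t 0|) '' T) :=
    (h.2.1.image ((continuous_apply 0).abs)).bddAbove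
  set a := sSup ((fun t => |t 0|) '' T)
  have ha : ∀ x ∈ T, |x 0| ≤ a := fun x hx => le_csSup hbdd (mem_image_of_mem _ hx)
  have h1 : ∀ x ∈ T, |x 1| ≤ (a + 1) / 3 := by
    intro x hx
    obtain ⟨u, hu, c, hc, hx1, -⟩ := exists_mem_coords_eq h hx
    have hu0 := ha u hu
    rw [abs_le] at *
    constructor <;> linarith
  have h0 : ∀ x ∈ T, |x 0| ≤ 2 * (a + 1) / 3 := by
    intro x hx
    obtain ⟨u, hu, c, -, -, hx0⟩ := exists_mem_coords_eq h hx
    have hu1 := h1 u hu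
    have hx1 := h1 x hx
    rw [abs_le] at *
    constructor <;> linarith
  have ha2 : a ≤ 2 := by
    have : a ≤ 2 * (a + 1) / 3 :=
      csSup_le (h.1.image _) (by rintro _ ⟨x, hx, rfl⟩; exact h0 x hx)
    linarith
  exact ⟨(ha x hx).trans ha2, (h1 x hx).trans (by linarith)⟩

def E₀ : Finset (Fin 2 → ℤ) := {![-2, 0], ![-1, 0], ![0, 0], ![1, 0], ![2, 0]}

def box₀ : Finset (Fin 2 → ℤ) :=
  (Finset.Icc (-4 : ℤ) 4 ×ˢ Finset.Icc (-2 : ℤ) 2).image fun p => ![p.1, p.2]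

def neighbors₀ : Finset (Fin 2 → ℤ) :=
  {0, ![1, 0], ![-1, 0], ![-2, 1], ![2, -1], ![-1, 1], ![1, -1], ![-4, 2], ![4, -2],
    ![-3, 1], ![3, -1]}

theorem prune_iterate_box₀ : (prune A₀ E₀)^[3] box₀ = neighbors₀ := by
  decide

theorem sub_mem_E₀ : ∀ e ∈ D₀, ∀ e' ∈ D₀, e - e' ∈ E₀ := by
  rintro e (rfl | rfl | rfl) e' (rfl | rfl | rfl) <;> decide

theorem mem_box₀ (h : SelfAffine A₀ D₀ T) (s : Fin 2 → ℤ) (hs : rvec s ∈ T - T) :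
    s ∈ box₀ := by
  obtain ⟨x, hx, y, hy, hxy⟩ := hs
  obtain ⟨hx0, hx1⟩ := abs_coord_le_of_mem h hx
  obtain ⟨hy0, hy1⟩ := abs_coord_le_of_mem h hy
  have hxy0 : x 0 - y 0 = s 0 := congrFun hxy 0
  have hxy1 : x 1 - y 1 = s 1 := congrFun hxy 1
  have hs0 : |s 0| ≤ 4 := by
    have : |(s 0 : ℝ)| ≤ 4 := hxy0 ▸ (abs_sub _ _).trans (by linarith)
    exact_mod_cast this
  have hs1 : |s 1| ≤ 2 := by
    have : |(s 1 : ℝ)| ≤ 2 := hxy1 ▸ (abs_sub _ _).trans (by linarith)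
    exact_mod_cast this
  refine Finset.mem_image.2 ⟨(s 0, s 1), Finset.mem_product.2
    ⟨Finset.mem_Icc.2 (abs_le.1 hs0), Finset.mem_Icc.2 (abs_le.1 hs1)⟩, ?_⟩
  ext i; fin_cases i <;> rfl

theorem mem_neighbors₀ (h : SelfAffine A₀ D₀ T) {s : Fin 2 → ℤ} (hs : rvec s ∈ T - T) :
    s ∈ neighbors₀ :=
  prune_iterate_box₀ ▸ h.mem_prune_iterate sub_mem_E₀ (mem_box₀ h) 3 hs

theorem isUnit_det_rmat_A₀ : IsUnit (rmat A₀).det := by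
  simp [rmat, Matrix.det_fin_two]

theorem inv_rmat_A₀ : (rmat A₀)⁻¹ = !![-1/3, 1; 1/3, 0] := by
  refine Matrix.inv_eq_left_inv ?_
  ext i j; fin_cases i <;> fin_cases j <;> norm_num [rmat, Matrix.mul_apply, Fin.sum_univ_two]

theorem inv_rmat_A₀_sq : (rmat A₀)⁻¹ * (rmat A₀)⁻¹ = !![4/9, -1/3; -1/9, 1/3] := by
  rw [inv_rmat_A₀, Matrix.mul_fin_two]
  norm_num

theorem norm_inv_sq_mulVec_le (v : Fin 2 → ℝ) :
    ‖((rmat A₀)⁻¹ * (rmat A₀)⁻¹) *ᵥ v‖ ≤ (7 / 9 : ℝ≥0) * ‖v‖ := by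
  have hv0 := abs_le.1 ((Real.norm_eq_abs _).symm.trans_le (norm_le_pi_norm v 0))
  have hv1 := abs_le.1 ((Real.norm_eq_abs _).symm.trans_le (norm_le_pi_norm v 1))
  rw [inv_rmat_A₀_sq, Matrix.mulVec_fin_two, pi_norm_le_iff_of_nonneg (by positivity),
    Fin.forall_fin_two]
  simp only [Real.norm_eq_abs, abs_le, Matrix.of_apply, Matrix.cons_val_zero, Matrix.cons_val_one,
    NNReal.coe_div, NNReal.coe_ofNat]
  refine ⟨⟨?_, ?_⟩, ?_, ?_⟩ <;> linarith

theorem rvec_mem_sub_self_of_mem_neighbors₀ (h : SelfAffine A₀ D₀ T) {s : Fin 2 → ℤ}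
    (hs : s ∈ neighbors₀) : rvec s ∈ T - T := by
  have hneg {s t : Fin 2 → ℤ} (hst : -s = t) (hs : rvec s ∈ T - T) : rvec t ∈ T - T := by
    simpa [← hst] using neg_mem_sub_self hs
  have hD : ![0, 0] ∈ D₀ ∧ ![1, 0] ∈ D₀ ∧ ![-1, 0] ∈ D₀ := by simp
  -- the cycles `(1, 0) → (-1, 1) → (1, 0)` and `(-4, 2) → (4, -2) → (-4, 2)`
  have h10 : rvec ![1, 0] ∈ T - T :=
    h.rvec_mem_sub_self_of_cycle isUnit_det_rmat_A₀ (by norm_num) norm_inv_sq_mulVec_le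
      hD.2.2 hD.1 hD.2.2 hD.2.1 (by decide)
  have h42 : rvec ![-4, 2] ∈ T - T :=
    h.rvec_mem_sub_self_of_cycle isUnit_det_rmat_A₀ (by norm_num) norm_inv_sq_mulVec_le
      hD.2.2 hD.2.1 hD.2.1 hD.2.2 (by decide)
  have h11 : rvec ![-1, 1] ∈ T - T :=
    h.rvec_mem_sub_self_of_mulVec_add isUnit_det_rmat_A₀ hD.2.2 hD.2.1 (by decide) h10
  have h1m1 : rvec ![1, -1] ∈ T - T := hneg (by decide) h11
  have h4m2 : rvec ![4, -2] ∈ T - T := hneg (by decide) h42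
  have h21 : rvec ![-2, 1] ∈ T - T :=
    h.rvec_mem_sub_self_of_mulVec_add isUnit_det_rmat_A₀ hD.2.2 hD.2.1 (by decide) h1m1
  have h31 : rvec ![-3, 1] ∈ T - T :=
    h.rvec_mem_sub_self_of_mulVec_add isUnit_det_rmat_A₀ hD.2.1 hD.1 (by decide) h4m2
  simp only [neighbors₀, Finset.mem_insert, Finset.mem_singleton] at hs
  rcases hs with rfl | rfl | rfl | rfl | rfl | rfl | rfl | rfl | rfl | rfl | rfl
  exacts [⟨_, h.1.some_mem, _, h.1.some_mem, by funext i; simp [rvec]⟩, h10, hneg (by decide) h10,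
    h21, hneg (by decide) h21, h11, h1m1, h42, h4m2, h31, hneg (by decide) h31]

end ThreeDigitTile

theorem statement13 (T : Set (Fin 2 → ℝ))
    (hself : SelfAffine !![0, 3; 1, 1]
      ({![0, 0], ![1, 0], ![-1, 0]} : Set (Fin 2 → ℤ)) T) :
    ∀ s : Fin 2 → ℤ, s ≠ 0 →
      ((T ∩ trT T s).Nonempty ↔
        s ∈ ({![1, 0], ![-1, 0], ![-2, 1], ![2, -1], ![-1, 1], ![1, -1],
          ![-4, 2], ![4, -2], ![-3, 1], ![3, -1]} : Set (Fin 2 → ℤ))) := by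
  intro s hs
  have hlist : s ∈ ThreeDigitTile.neighbors₀ ↔ s ∈ ({![1, 0], ![-1, 0], ![-2, 1], ![2, -1],
      ![-1, 1], ![1, -1], ![-4, 2], ![4, -2], ![-3, 1], ![3, -1]} : Set (Fin 2 → ℤ)) := by
    simp [ThreeDigitTile.neighbors₀, hs]
  rw [nonempty_inter_trT_iff, ← hlist]
  exact ⟨ThreeDigitTile.mem_neighbors₀ hself, ThreeDigitTile.rvec_mem_sub_self_of_mem_neighbors₀ hself⟩
end
end

section
/- Let A be the 2×2 integer matrix with rows (0, 3) and (1, 1), let D := {(0,0), (1,0), (−1,0)} ⊂ ℤ², and let T = T(A,D) be the unique nonempty compact subset of ℝ² with A·T = T + D. Then T is connected and the origin z = (0,0) is a cut point of T, i.e., T \ {(0,0)} is disconnected. -/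
open Set Filter Topology Matrix

noncomputable section

/-!
Put `B = A⁻¹` and `f e x = B (x + e)`, so that `T = f₀ T ∪ f₁ T ∪ f₋₁ T`. The map `B` contracts the
weighted norm `max |x₀| (2 |x₁|)` by `5/6`, so the pieces `f_{e₁} ∘ ⋯ ∘ f_{eₙ} '' T` shrink
geometrically. The points `±q`, `q = (1/2, 0)`, are periodic points of the system, hence lie in `T`,
and `f₁ (-q) = f₀ q`, `f₋₁ q = f₀ (-q)`: both outer pieces meet the middle one, and Hata's
criterion shows that `T` is connected.

For the cut point, `φ x = x₀ + λ x₁` with `λ = (1 + √13)/2` satisfies `φ (f e x) = (φ x + e₀)/λ`, so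
`|φ| < 1` on `T`. A point of `T` with `φ = 0` must then use the digit `0` at every level, which
forces it to be `0`. Hence `T \ {0}` is split by the open half-planes `φ > 0` and `φ < 0`, which
contain `f₁ 0` and `f₋₁ 0` respectively.
-/

open Function Relation

theorem sepUnion_of_continuous {X : Type*} [TopologicalSpace X] {S : Set X} {φ : X → ℝ}
    (hφ : Continuous φ) (hS : ∀ x ∈ S, φ x ≠ 0) (hpos : ∃ x ∈ S, 0 < φ x)
    (hneg : ∃ x ∈ S, φ x < 0) :
    SepUnion S := by
  obtain ⟨a, ha, hpa⟩ := hpos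
  obtain ⟨b, hb, hnb⟩ := hneg
  refine ⟨S ∩ {x | 0 < φ x}, S ∩ {x | φ x < 0}, ?_, ⟨a, ha, hpa⟩, ⟨b, hb, hnb⟩, ?_, ?_⟩
  · ext x
    constructor
    · intro hx
      rcases (hS x hx).lt_or_gt with h | h
      exacts [Or.inr ⟨hx, h⟩, Or.inl ⟨hx, h⟩]
    · rintro (⟨hx, -⟩ | ⟨hx, -⟩) <;> exact hx
  · refine eq_empty_iff_forall_notMem.2 fun x ⟨hxU, hxV⟩ => ?_
    have : 0 ≤ φ x := closure_minimal (fun y hy => show 0 ≤ φ y from hy.2.le)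
      (isClosed_le continuous_const hφ) hxU
    exact this.not_gt hxV.2
  · refine eq_empty_iff_forall_notMem.2 fun x ⟨hxU, hxV⟩ => ?_
    have : φ x ≤ 0 := closure_minimal (fun y hy => show φ y ≤ 0 from hy.2.le)
      (isClosed_le hφ continuous_const) hxV
    exact this.not_gt hxU.2

section Metric

variable {X : Type*} [MetricSpace X]

theorem IsCompact.isPreconnected_of_forall_chain {K : Set X} (hK : IsCompact K)
    (h : ∀ ε > 0, ∀ x ∈ K, ∀ y ∈ K,
      ReflTransGen (fun a b => a ∈ K ∧ b ∈ K ∧ dist a b < ε) x y) :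
    IsPreconnected K := by
  refine isPreconnected_of_forall_constant fun f hf x hx y hy => ?_
  obtain ⟨ε, hε, hfε⟩ : ∃ ε > 0, ∀ a b, a ∈ K → b ∈ K → dist a b < ε → f a = f b := by
    have := hK.uniformContinuousOn_of_continuous hf (DiscreteUniformity.relId_mem_uniformity Bool)
    obtain ⟨ε, hε, hsub⟩ := Metric.mem_uniformity_dist.1 (mem_inf_principal.1 this)
    exact ⟨ε, hε, fun a b ha hb hab => hsub hab ⟨ha, hb⟩⟩
  induction h ε hε x hx y hy with
  | refl => rfl
  | tail _ hbc ih => exact (ih hbc.1).trans (hfε _ _ hbc.1 hbc.2.1 hbc.2.2)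

theorem ContractingWith.mem_of_isFixedPt_s15 [CompleteSpace X] {K : NNReal} {G : X → X}
    (hG : ContractingWith K G) {T : Set X} (hT : IsClosed T) (hne : T.Nonempty)
    (hmaps : MapsTo G T T) {x : X} (hx : IsFixedPt G x) : x ∈ T := by
  obtain ⟨t, ht⟩ := hne
  have : Nonempty X := ⟨t⟩
  rw [hG.fixedPoint_unique hx]
  exact hT.mem_of_tendsto (hG.tendsto_iterate_fixedPoint t)
    (Eventually.of_forall fun n => hmaps.iterate n ht)

end Metric

section Attractor

variable {X ι : Type*} {f : ι → X → X} {T : Set X}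

/-- `a` and `b` lie in a common piece `f i₁ ∘ ⋯ ∘ f iₙ '' T` of level `n`. -/
inductive InCommonPiece (f : ι → X → X) (T : Set X) : ℕ → X → X → Prop
  | base {a b : X} : a ∈ T → b ∈ T → InCommonPiece f T 0 a b
  | map {n : ℕ} {a b : X} (i : ι) :
      InCommonPiece f T n a b → InCommonPiece f T (n + 1) (f i a) (f i b)

theorem mapsTo_of_eq_iUnion_image (hT : T = ⋃ i, f i '' T) (i : ι) : MapsTo (f i) T T :=
  fun x hx => by rw [hT]; exact mem_iUnion_of_mem i (mem_image_of_mem _ hx)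

theorem InCommonPiece.mem {n : ℕ} {a b : X} (hmaps : ∀ i, MapsTo (f i) T T) :
    InCommonPiece f T n a b → a ∈ T ∧ b ∈ T
  | .base ha hb => ⟨ha, hb⟩
  | .map i h => (h.mem hmaps).imp (hmaps i ·) (hmaps i ·)

theorem InCommonPiece.exists_sub_eq_iterate [AddGroup X] {L : X → X}
    (hf : ∀ i x y, f i x - f i y = L (x - y)) {n : ℕ} {a b : X} :
    InCommonPiece f T n a b → ∃ a' ∈ T, ∃ b' ∈ T, a - b = L^[n] (a' - b')
  | .base ha hb => ⟨a, ha, b, hb, rfl⟩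
  | .map i h => by
    obtain ⟨a', ha', b', hb', hab⟩ := h.exists_sub_eq_iterate hf
    exact ⟨a', ha', b', hb', by rw [hf, hab, iterate_succ_apply']⟩

theorem reflTransGen_inCommonPiece (hcover : T ⊆ ⋃ i, f i '' T)
    (hlink : ∀ i j, ReflTransGen (fun i j => (f i '' T ∩ f j '' T).Nonempty) i j) (n : ℕ) :
    ∀ x ∈ T, ∀ y ∈ T, ReflTransGen (InCommonPiece f T n) x y := by
  induction n with
  | zero => exact fun x hx y hy => .single (.base hx hy)
  | succ n ih =>
    have same : ∀ i, ∀ x ∈ T, ∀ y ∈ T,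
        ReflTransGen (InCommonPiece f T (n + 1)) (f i x) (f i y) :=
      fun i x hx y hy => (ih x hx y hy).lift (f i) fun a b h => h.map i
    have across : ∀ i j, ReflTransGen (fun i j => (f i '' T ∩ f j '' T).Nonempty) i j →
        ∀ x ∈ T, ∀ y ∈ T, ReflTransGen (InCommonPiece f T (n + 1)) (f i x) (f j y) := by
      intro i j hij
      induction hij with
      | refl => exact same i
      | tail _ hkj ih' =>
        obtain ⟨z, ⟨a, ha, rfl⟩, ⟨b, hb, hba⟩⟩ := hkj
        intro x hx y hy
        exact (ih' x hx a ha).trans (hba ▸ same _ b hb y hy)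
    intro x hx y hy
    obtain ⟨i, x', hx', rfl⟩ := mem_iUnion.1 (hcover hx)
    obtain ⟨j, y', hy', rfl⟩ := mem_iUnion.1 (hcover hy)
    exact across i j (hlink i j) x' hx' y' hy'

/-- Hata's connectedness criterion. -/
theorem IsCompact.isPreconnected_of_linked [MetricSpace X] (hK : IsCompact T)
    (hT : T = ⋃ i, f i '' T)
    (hshrink : ∀ ε > 0, ∃ n, ∀ a b, InCommonPiece f T n a b → dist a b < ε)
    (hlink : ∀ i j, ReflTransGen (fun i j => (f i '' T ∩ f j '' T).Nonempty) i j) :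
    IsPreconnected T := by
  have hmaps := mapsTo_of_eq_iUnion_image hT
  refine hK.isPreconnected_of_forall_chain fun ε hε x hx y hy => ?_
  obtain ⟨n, hn⟩ := hshrink ε hε
  refine ReflTransGen.mono (fun a b h => ?_) x y
    (reflTransGen_inCommonPiece hT.subset hlink n x hx y hy)
  exact ⟨(h.mem hmaps).1, (h.mem hmaps).2, hn a b h⟩

end Attractor

theorem SelfAffine.eq_iUnion_image {d : ℕ} {A : Matrix (Fin d) (Fin d) ℤ}
    {D : Set (Fin d → ℤ)} {T : Set (Fin d → ℝ)} (h : SelfAffine A D T)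
    {B : Matrix (Fin d) (Fin d) ℝ} (hB : B * rmat A = 1) :
    T = ⋃ e : D, (fun x => B *ᵥ (x + rvec e)) '' T := by
  have hinv : LeftInverse (B *ᵥ ·) (rmat A *ᵥ ·) := fun x => by
    simp only [mulVec_mulVec, hB, one_mulVec]
  calc T = (B *ᵥ ·) '' ((rmat A *ᵥ ·) '' T) := (hinv.image_image T).symm
    _ = _ := by rw [h.2.2, image_iUnion₂, biUnion_eq_iUnion]; simp only [image_image]

namespace CutPointTile

def digits : Set (Fin 2 → ℤ) := {![0, 0], ![1, 0], ![-1, 0]}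

def d0 : digits := ⟨![0, 0], by simp [digits]⟩
def d1 : digits := ⟨![1, 0], by simp [digits]⟩
def dm : digits := ⟨![-1, 0], by simp [digits]⟩

lemma digits_cases (e : digits) : e = d0 ∨ e = d1 ∨ e = dm := by
  obtain ⟨e, he⟩ := e
  simp only [digits, mem_insert_iff, mem_singleton_iff] at he
  rcases he with rfl | rfl | rfl
  exacts [Or.inl rfl, Or.inr (Or.inl rfl), Or.inr (Or.inr rfl)]

lemma rvec_d0 : rvec (d0 : Fin 2 → ℤ) = 0 := by ext i; fin_cases i <;> simp [rvec, d0]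
lemma rvec_d1 : rvec (d1 : Fin 2 → ℤ) = ![1, 0] := by ext i; fin_cases i <;> simp [rvec, d1]
lemma rvec_dm : rvec (dm : Fin 2 → ℤ) = ![-1, 0] := by ext i; fin_cases i <;> simp [rvec, dm]

def B : Matrix (Fin 2) (Fin 2) ℝ := !![-1/3, 1; 1/3, 0]

lemma B_mul_rmat : B * rmat !![0, 3; 1, 1] = 1 := by
  ext i j; fin_cases i <;> fin_cases j <;> norm_num [B, rmat, mul_apply, Fin.sum_univ_two]

lemma B_mulVec (x : Fin 2 → ℝ) : B *ᵥ x = ![-(x 0) / 3 + x 1, x 0 / 3] := by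
  ext i; fin_cases i <;> simp [B, mulVec, dotProduct] <;> ring

def digitMap (e : digits) (x : Fin 2 → ℝ) : Fin 2 → ℝ := B *ᵥ (x + rvec e)

lemma digitMap_sub (e : digits) (x y : Fin 2 → ℝ) :
    digitMap e x - digitMap e y = B *ᵥ (x - y) := by
  rw [digitMap, digitMap, ← mulVec_sub, add_sub_add_right_eq_sub]

lemma digitMap_d0_zero : digitMap d0 0 = 0 := by
  rw [digitMap, rvec_d0, add_zero, mulVec_zero]

/-- `B` is not a contraction for the sup norm, but it is one for this weighted norm. -/
def wnorm (x : Fin 2 → ℝ) : ℝ := max |x 0| (2 * |x 1|)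

lemma wnorm_B_mulVec_le (x : Fin 2 → ℝ) : wnorm (B *ᵥ x) ≤ 5 / 6 * wnorm x := by
  have h0 : |x 0| ≤ wnorm x := le_max_left _ _
  have h1 : 2 * |x 1| ≤ wnorm x := le_max_right _ _
  rw [wnorm, B_mulVec]
  simp only [cons_val_zero, cons_val_one]
  refine max_le ?_ ?_
  · calc |-(x 0) / 3 + x 1| ≤ |x 0| / 3 + |x 1| := by
          simpa [abs_div, abs_neg] using abs_add_le (-(x 0) / 3) (x 1)
      _ ≤ 5 / 6 * wnorm x := by linarith
  · rw [abs_div, abs_of_pos (by norm_num : (0 : ℝ) < 3)]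
    linarith [abs_nonneg (x 0)]

lemma norm_le_wnorm (x : Fin 2 → ℝ) : ‖x‖ ≤ wnorm x := by
  refine (pi_norm_le_iff_of_nonneg ((abs_nonneg _).trans (le_max_left _ _))).2 fun i => ?_
  fin_cases i
  · exact le_max_left _ _
  · exact (le_mul_of_one_le_left (abs_nonneg _) one_le_two).trans (le_max_right _ _)

lemma wnorm_le_two_mul_norm (x : Fin 2 → ℝ) : wnorm x ≤ 2 * ‖x‖ := by
  have h0 : |x 0| ≤ ‖x‖ := norm_le_pi_norm x 0
  have h1 : |x 1| ≤ ‖x‖ := norm_le_pi_norm x 1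
  exact max_le (by linarith [norm_nonneg x]) (by linarith)

lemma norm_iterate_B_mulVec_le (n : ℕ) (x : Fin 2 → ℝ) :
    ‖(B *ᵥ ·)^[n] x‖ ≤ 2 * (5 / 6) ^ n * ‖x‖ := by
  have : wnorm ((B *ᵥ ·)^[n] x) ≤ (5 / 6) ^ n * wnorm x := by
    induction n with
    | zero => simp
    | succ n ih =>
      rw [iterate_succ_apply', pow_succ']
      exact (wnorm_B_mulVec_le _).trans (by rw [mul_assoc]; gcongr)
  calc ‖(B *ᵥ ·)^[n] x‖ ≤ (5 / 6) ^ n * wnorm x := (norm_le_wnorm _).trans this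
    _ ≤ 2 * (5 / 6) ^ n * ‖x‖ := by
      rw [mul_comm 2, mul_assoc]; gcongr; exact wnorm_le_two_mul_norm x

def wordMap : List digits → (Fin 2 → ℝ) → (Fin 2 → ℝ)
  | [] => id
  | e :: w => digitMap e ∘ wordMap w

lemma wordMap_sub (w : List digits) (x y : Fin 2 → ℝ) :
    wordMap w x - wordMap w y = (B *ᵥ ·)^[w.length] (x - y) := by
  induction w with
  | nil => rfl
  | cons e w ih =>
    rw [wordMap, Function.comp_apply, Function.comp_apply, digitMap_sub, ih, List.length_cons,
      iterate_succ_apply']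

lemma contractingWith_wordMap {w : List digits} (hw : 4 ≤ w.length) :
    ContractingWith (2 * (5 / 6) ^ 4) (wordMap w) := by
  refine ⟨by norm_num, LipschitzWith.of_dist_le_mul fun x y => ?_⟩
  rw [dist_eq_norm, dist_eq_norm, wordMap_sub]
  refine (norm_iterate_B_mulVec_le _ _).trans ?_
  have := pow_le_pow_of_le_one (by norm_num : (0 : ℝ) ≤ 5 / 6) (by norm_num) hw
  push_cast
  exact mul_le_mul_of_nonneg_right (by linarith) (norm_nonneg _)

def q : Fin 2 → ℝ := ![1 / 2, 0]

lemma wordMap_q : wordMap [d1, d1, dm, dm, dm, d1] q = q := by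
  simp only [wordMap, Function.comp_apply, id, digitMap, rvec_d1, rvec_dm, q, B_mulVec]
  norm_num

lemma wordMap_neg_q : wordMap [dm, dm, d1, d1, d1, dm] (-q) = -q := by
  simp only [wordMap, Function.comp_apply, id, digitMap, rvec_d1, rvec_dm, q, B_mulVec]
  norm_num

lemma digitMap_d1_neg_q : digitMap d1 (-q) = digitMap d0 q := by
  simp only [digitMap, rvec_d1, rvec_d0, q, B_mulVec]
  norm_num

lemma digitMap_dm_q : digitMap dm q = digitMap d0 (-q) := by
  simp only [digitMap, rvec_dm, rvec_d0, q, B_mulVec]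
  norm_num

lemma wordMap_zero : wordMap [d0, d0, d0, d0] 0 = 0 := by
  simp only [wordMap, Function.comp_apply, id, digitMap_d0_zero]

def lam : ℝ := (1 + √13) / 2

lemma lam_sq : lam ^ 2 = lam + 3 := by
  rw [lam, div_pow, add_sq, Real.sq_sqrt (by norm_num)]; ring

lemma two_lt_lam : 2 < lam := by
  have : 3 < √13 := by
    rw [show (3 : ℝ) = √9 by rw [show (9 : ℝ) = 3 ^ 2 by norm_num, Real.sqrt_sq (by norm_num)]]
    exact Real.sqrt_lt_sqrt (by norm_num) (by norm_num)
  rw [lam]; linarith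

/-- A left eigenvector of `!![0, 3; 1, 1]` for its eigenvalue `lam`. -/
def ph (x : Fin 2 → ℝ) : ℝ := x 0 + lam * x 1

lemma continuous_ph : Continuous ph := by unfold ph; fun_prop

lemma ph_zero : ph 0 = 0 := by simp [ph]

lemma ph_rvec_d0 : ph (rvec (d0 : Fin 2 → ℤ)) = 0 := by simp [ph, rvec_d0]
lemma ph_rvec_d1 : ph (rvec (d1 : Fin 2 → ℤ)) = 1 := by simp [ph, rvec_d1]
lemma ph_rvec_dm : ph (rvec (dm : Fin 2 → ℤ)) = -1 := by simp [ph, rvec_dm]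

lemma abs_ph_rvec_le_one (e : digits) : |ph (rvec (e : Fin 2 → ℤ))| ≤ 1 := by
  rcases digits_cases e with rfl | rfl | rfl <;> simp [ph_rvec_d0, ph_rvec_d1, ph_rvec_dm]

lemma ph_digitMap (e : digits) (x : Fin 2 → ℝ) :
    ph (digitMap e x) = (ph x + ph (rvec (e : Fin 2 → ℤ))) / lam := by
  have hlam : lam ≠ 0 := by linarith [two_lt_lam]
  simp only [ph, digitMap, B_mulVec, cons_val_zero, cons_val_one, Pi.add_apply]
  field_simp
  linear_combination (x 0 + rvec (e : Fin 2 → ℤ) 0) * lam_sq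

section Attractor

variable {T : Set (Fin 2 → ℝ)}

lemma eq_iUnion_digitMap (h : SelfAffine !![0, 3; 1, 1] digits T) :
    T = ⋃ e : digits, digitMap e '' T :=
  h.eq_iUnion_image B_mul_rmat

lemma mapsTo_wordMap (hmaps : ∀ e, MapsTo (digitMap e) T T) :
    ∀ w, MapsTo (wordMap w) T T
  | [] => mapsTo_id T
  | e :: w => (hmaps e).comp (mapsTo_wordMap hmaps w)

lemma mem_of_wordMap_eq (hK : IsClosed T) (hne : T.Nonempty)
    (hmaps : ∀ e, MapsTo (digitMap e) T T) {w : List digits} (hw : 4 ≤ w.length)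
    {x : Fin 2 → ℝ} (hx : wordMap w x = x) : x ∈ T :=
  (contractingWith_wordMap hw).mem_of_isFixedPt_s15 hK hne (mapsTo_wordMap hmaps w) hx

lemma zero_mem (hne : T.Nonempty) (hK : IsCompact T) (hT : T = ⋃ e, digitMap e '' T) :
    (0 : Fin 2 → ℝ) ∈ T :=
  mem_of_wordMap_eq hK.isClosed hne (mapsTo_of_eq_iUnion_image hT) (by simp) wordMap_zero

lemma exists_dist_lt (hK : IsCompact T) :
    ∀ ε > 0, ∃ n, ∀ a b, InCommonPiece digitMap T n a b → dist a b < ε := by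
  intro ε hε
  have hlim : Tendsto (fun n : ℕ => 2 * (5 / 6) ^ n * Metric.diam T) atTop (𝓝 0) := by
    simpa using ((tendsto_pow_atTop_nhds_zero_of_lt_one (by norm_num)
      (by norm_num : (5 / 6 : ℝ) < 1)).const_mul 2).mul_const (Metric.diam T)
  obtain ⟨n, hn⟩ := (hlim.eventually (gt_mem_nhds hε)).exists
  refine ⟨n, fun a b hab => ?_⟩
  obtain ⟨a', ha', b', hb', h⟩ := hab.exists_sub_eq_iterate digitMap_sub
  calc dist a b ≤ 2 * (5 / 6) ^ n * dist a' b' := by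
        rw [dist_eq_norm, dist_eq_norm, h]; exact norm_iterate_B_mulVec_le n _
    _ ≤ 2 * (5 / 6) ^ n * Metric.diam T := by
        gcongr; exact Metric.dist_le_diam_of_mem hK.isBounded ha' hb'
    _ < ε := hn

lemma reflTransGen_inter_nonempty (hq : q ∈ T) (hnq : -q ∈ T) (i j : digits) :
    ReflTransGen (fun i j => (digitMap i '' T ∩ digitMap j '' T).Nonempty) i j := by
  have h10 : (digitMap d1 '' T ∩ digitMap d0 '' T).Nonempty :=
    ⟨_, ⟨-q, hnq, digitMap_d1_neg_q⟩, mem_image_of_mem _ hq⟩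
  have hm0 : (digitMap dm '' T ∩ digitMap d0 '' T).Nonempty :=
    ⟨_, ⟨q, hq, digitMap_dm_q⟩, mem_image_of_mem _ hnq⟩
  have to_d0 : ∀ i, ReflTransGen
      (fun i j => (digitMap i '' T ∩ digitMap j '' T).Nonempty) i d0 := by
    intro i
    rcases digits_cases i with rfl | rfl | rfl
    exacts [.refl, .single h10, .single hm0]
  have from_d0 : ∀ j, ReflTransGen
      (fun i j => (digitMap i '' T ∩ digitMap j '' T).Nonempty) d0 j := by
    intro j
    rcases digits_cases j with rfl | rfl | rfl
    exacts [.refl, .single (inter_comm _ _ ▸ h10), .single (inter_comm _ _ ▸ hm0)]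
  exact (to_d0 i).trans (from_d0 j)

theorem isConnected (hne : T.Nonempty) (hK : IsCompact T) (hT : T = ⋃ e, digitMap e '' T) :
    IsConnected T := by
  have hmaps := mapsTo_of_eq_iUnion_image hT
  have hq := mem_of_wordMap_eq hK.isClosed hne hmaps (by simp) wordMap_q
  have hnq := mem_of_wordMap_eq hK.isClosed hne hmaps (by simp) wordMap_neg_q
  exact ⟨hne, hK.isPreconnected_of_linked hT (exists_dist_lt hK)
    (reflTransGen_inter_nonempty hq hnq)⟩

lemma abs_ph_lt_one (hK : IsCompact T) (hT : T = ⋃ e, digitMap e '' T) :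
    ∀ t ∈ T, |ph t| < 1 := by
  rcases T.eq_empty_or_nonempty with rfl | hne
  · simp
  obtain ⟨m, hm, hmax⟩ := hK.exists_isMaxOn hne (continuous_abs.comp continuous_ph).continuousOn
  obtain ⟨e, y, hy, rfl⟩ := mem_iUnion.1 (hT.subset hm)
  have hlam := two_lt_lam
  have hself : |ph (digitMap e y)| * lam ≤ |ph (digitMap e y)| + 1 :=
    calc |ph (digitMap e y)| * lam = |ph y + ph (rvec (e : Fin 2 → ℤ))| := by
          rw [ph_digitMap, abs_div, abs_of_pos (show (0 : ℝ) < lam by linarith),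
            div_mul_cancel₀ _ (show lam ≠ 0 by linarith)]
      _ ≤ |ph y| + |ph (rvec (e : Fin 2 → ℤ))| := abs_add_le _ _
      _ ≤ |ph (digitMap e y)| + 1 := add_le_add (hmax hy) (abs_ph_rvec_le_one e)
  have : |ph (digitMap e y)| < 1 := by nlinarith [abs_nonneg (ph (digitMap e y))]
  exact fun t ht => (hmax ht).trans_lt this

lemma inCommonPiece_zero_of_ph_eq_zero (hK : IsCompact T) (hT : T = ⋃ e, digitMap e '' T)
    (h0 : (0 : Fin 2 → ℝ) ∈ T) (n : ℕ) :
    ∀ x ∈ T, ph x = 0 → InCommonPiece digitMap T n x 0 := by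
  induction n with
  | zero => exact fun x hx _ => .base hx h0
  | succ n ih =>
    intro x hx hx0
    obtain ⟨e, y, hy, rfl⟩ := mem_iUnion.1 (hT.subset hx)
    have hy1 := abs_lt.1 (abs_ph_lt_one hK hT y hy)
    have hsum : ph y + ph (rvec (e : Fin 2 → ℤ)) = 0 := by
      rwa [ph_digitMap, div_eq_zero_iff, or_iff_left (by linarith [two_lt_lam])] at hx0
    rcases digits_cases e with rfl | rfl | rfl
    · rw [← digitMap_d0_zero]
      exact (ih y hy (by simpa [ph_rvec_d0] using hsum)).map d0
    · rw [ph_rvec_d1] at hsum; linarith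
    · rw [ph_rvec_dm] at hsum; linarith

lemma eq_zero_of_ph_eq_zero (hK : IsCompact T) (hT : T = ⋃ e, digitMap e '' T)
    (h0 : (0 : Fin 2 → ℝ) ∈ T) {x : Fin 2 → ℝ} (hx : x ∈ T) (hx0 : ph x = 0) : x = 0 :=
  eq_of_forall_dist_le fun ε hε => by
    obtain ⟨n, hn⟩ := exists_dist_lt hK ε hε
    exact (hn _ _ (inCommonPiece_zero_of_ph_eq_zero hK hT h0 n x hx hx0)).le

lemma sepUnion_diff_zero (hK : IsCompact T) (hT : T = ⋃ e, digitMap e '' T)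
    (h0 : (0 : Fin 2 → ℝ) ∈ T) : SepUnion (T \ {0}) := by
  have hmaps := mapsTo_of_eq_iUnion_image hT
  have hlam := two_lt_lam
  have ne_zero : ∀ {x : Fin 2 → ℝ}, ph x ≠ 0 → x ≠ 0 := fun h hx => h (hx ▸ ph_zero)
  refine sepUnion_of_continuous continuous_ph
    (fun x hx hx0 => hx.2 (eq_zero_of_ph_eq_zero hK hT h0 hx.1 hx0)) ?_ ?_
  · have : 0 < ph (digitMap d1 0) := by
      rw [ph_digitMap, ph_zero, ph_rvec_d1, zero_add]
      exact div_pos one_pos (by linarith)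
    exact ⟨_, ⟨hmaps d1 h0, ne_zero this.ne'⟩, this⟩
  · have : ph (digitMap dm 0) < 0 := by
      rw [ph_digitMap, ph_zero, ph_rvec_dm, zero_add]
      exact div_neg_of_neg_of_pos (by norm_num) (by linarith)
    exact ⟨_, ⟨hmaps dm h0, ne_zero this.ne⟩, this⟩

end Attractor

end CutPointTile

theorem statement15 (T : Set (Fin 2 → ℝ))
    (hself : SelfAffine !![0, 3; 1, 1]
      ({![0, 0], ![1, 0], ![-1, 0]} : Set (Fin 2 → ℤ)) T) :
    IsConnected T ∧ (0 : Fin 2 → ℝ) ∈ T ∧ SepUnion (T \ {(0 : Fin 2 → ℝ)}) := by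
  have hne := hself.1
  have hK := hself.2.1
  have hT := CutPointTile.eq_iUnion_digitMap hself
  have h0 := CutPointTile.zero_mem hne hK hT
  exact ⟨CutPointTile.isConnected hne hK hT, h0, CutPointTile.sepUnion_diff_zero hK hT h0⟩
end
end
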